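/- arXiv:2509.26635 — 9 statements merged into one kernel-verified Lean document; each statement's English description precedes it below -/
import Mathlib

section
/- Let p ≥ m ≥ 1 be integers, let A be an m×p matrix with integer entries of rank m, and let b ∈ ℝ^m. If U is a random vector uniformly distributed on [0,1]^p, then the random vector Ψ_{A,b}(U) ∈ [0,1]^m whose i-th component is frac((AU + b)_i), i = 1,…,m, is uniformly distributed on [0,1]^m. -/
/-!
Reduction mod 1 carries the uniform measure on `[0,1]^k` to the Haar probability measure of the
torus `𝕋^k = (ℝ/ℤ)^k`, and `Ψ_{A,b}` factors as reduction mod 1, then `x ↦ Ax + b` on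
`𝕋^p → 𝕋^m`, then the fractional-part representative. Since `A` has rank `m`, `x ↦ Ax` is a
continuous surjective homomorphism of compact groups, so it carries Haar probability measure to
Haar probability measure, and so does translation by `b`. Taking representatives in `[0,1)^m`
returns Haar measure to the uniform measure, because doing so after reduction mod 1 is the
identity almost everywhere on `[0,1]^m`.
-/

open MeasureTheory Set

noncomputable section

instance UnitAddCircle.isProbabilityMeasure :
    IsProbabilityMeasure (volume : Measure UnitAddCircle) :=
  ⟨UnitAddCircle.measure_univ⟩

theorem AddMonoidHom.measurePreserving_of_continuous_of_surjective {G H : Type*}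
    [AddGroup G] [TopologicalSpace G] [IsTopologicalAddGroup G] [MeasurableSpace G] [BorelSpace G]
    [AddGroup H] [TopologicalSpace H] [IsTopologicalAddGroup H] [MeasurableSpace H] [BorelSpace H]
    [LocallyCompactSpace H] {μ : Measure G} [μ.IsAddHaarMeasure] [IsProbabilityMeasure μ]
    {ν : Measure H} [ν.IsAddHaarMeasure] [IsProbabilityMeasure ν]
    (f : G →+ H) (hf : Continuous f) (hsurj : Function.Surjective f) :
    MeasurePreserving f μ ν := by
  have := Measure.isAddHaarMeasure_map_of_isFiniteMeasure μ f hf hsurj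
  have := Measure.isProbabilityMeasure_map (μ := μ) hf.aemeasurable
  exact ⟨hf.measurable, Measure.isAddHaarMeasure_eq_of_isProbabilityMeasure _ _⟩

theorem Matrix.mulVec_surjective_of_rank_eq {κ ι K : Type*} [Fintype κ] [Fintype ι] [Field K]
    (A : Matrix κ ι K) (h : A.rank = Fintype.card κ) : Function.Surjective A.mulVec := by
  have : LinearMap.range A.mulVecLin = ⊤ := Submodule.eq_top_of_finrank_eq <| by
    rw [← Matrix.rank, h, Module.finrank_fintype_fun_eq_card]
  exact LinearMap.range_eq_top.mp this

namespace Matrix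

variable {κ ι : Type*} [Fintype ι]

def unitAddTorusMulVec (A : Matrix κ ι ℤ) : UnitAddTorus ι →+ UnitAddTorus κ where
  toFun x i := ∑ j, A i j • x j
  map_zero' := by ext; simp
  map_add' x y := by ext; simp [smul_add, Finset.sum_add_distrib]

theorem continuous_unitAddTorusMulVec (A : Matrix κ ι ℤ) : Continuous A.unitAddTorusMulVec :=
  continuous_pi fun i => continuous_finsetSum _ fun j _ =>
    (continuous_zsmul (A i j)).comp (continuous_apply j)

theorem unitAddTorusMulVec_coe (A : Matrix κ ι ℤ) (u : ι → ℝ) :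
    A.unitAddTorusMulVec (fun j => (u j : UnitAddCircle)) =
      fun i => ((A.map (Int.cast : ℤ → ℝ) *ᵥ u) i : UnitAddCircle) := by
  ext i
  simp [unitAddTorusMulVec, mulVec, dotProduct, ← zsmul_eq_mul]

theorem unitAddTorusMulVec_surjective (A : Matrix κ ι ℤ)
    (h : Function.Surjective (A.map (Int.cast : ℤ → ℝ)).mulVec) :
    Function.Surjective A.unitAddTorusMulVec := by
  intro y
  choose r hr using fun i => QuotientAddGroup.mk_surjective (y i)
  obtain ⟨u, hu⟩ := h r
  exact ⟨fun j => (u j : UnitAddCircle), by simp [unitAddTorusMulVec_coe, hu, hr]⟩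

theorem measurePreserving_unitAddTorusMulVec [Fintype κ] (A : Matrix κ ι ℤ)
    (h : Function.Surjective (A.map (Int.cast : ℤ → ℝ)).mulVec) :
    MeasurePreserving A.unitAddTorusMulVec :=
  A.unitAddTorusMulVec.measurePreserving_of_continuous_of_surjective
    A.continuous_unitAddTorusMulVec (A.unitAddTorusMulVec_surjective h)

end Matrix

namespace UnitAddCircle

def fract : UnitAddCircle → ℝ := (Int.fract_periodic ℝ).lift

theorem fract_coe (x : ℝ) : fract x = Int.fract x := rfl

@[fun_prop]
theorem measurable_fract : Measurable fract :=
  QuotientAddGroup.measurable_from_quotient.2 _root_.measurable_fract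

end UnitAddCircle

section Cube

variable {ι : Type*} [Fintype ι]

theorem measurePreserving_coe_unitAddTorus :
    MeasurePreserving (fun (u : ι → ℝ) j => (u j : UnitAddCircle))
      (volume.restrict (univ.pi fun _ => Icc 0 1)) volume := by
  rw [volume_pi, Measure.restrict_congr_set
    (Measure.pi_Ioc_ae_eq_pi_Icc (f := fun _ => 0) (g := fun _ => 1)).symm,
    Measure.restrict_pi_pi, volume_pi]
  exact measurePreserving_pi _ _ fun _ => by simpa using AddCircle.measurePreserving_mk 1 0

theorem map_fract_restrict_pi_Icc :
    Measure.map (fun (x : ι → ℝ) i => Int.fract (x i)) (volume.restrict (univ.pi fun _ => Icc 0 1))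
      = volume.restrict (univ.pi fun _ => Icc 0 1) := by
  rw [volume_pi, Measure.restrict_congr_set
    (Measure.pi_Ico_ae_eq_pi_Icc (f := fun _ => 0) (g := fun _ => 1)).symm]
  refine (Measure.map_congr ?_).trans Measure.map_id
  filter_upwards [ae_restrict_mem (MeasurableSet.univ_pi fun _ => measurableSet_Ico)] with x hx
  funext i
  exact Int.fract_eq_self.2 (hx i trivial)

theorem map_fract_unitAddTorus :
    Measure.map (fun (y : UnitAddTorus ι) i => UnitAddCircle.fract (y i)) volume
      = volume.restrict (univ.pi fun _ => Icc 0 1) := by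
  rw [← measurePreserving_coe_unitAddTorus.map_eq,
    Measure.map_map (by fun_prop) measurePreserving_coe_unitAddTorus.measurable]
  exact map_fract_restrict_pi_Icc

end Cube

end

theorem stmt_0_general (m p : ℕ)
    (A : Matrix (Fin m) (Fin p) ℤ) (b : Fin m → ℝ)
    (hrank : (A.map (Int.cast : ℤ → ℝ)).rank = m) :
    Measure.map
      (fun u : Fin p → ℝ => fun i : Fin m =>
        Int.fract ((A.map (Int.cast : ℤ → ℝ)).mulVec u i + b i))
      (volume.restrict (Set.univ.pi fun _ : Fin p => Set.Icc (0:ℝ) 1))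
    = volume.restrict (Set.univ.pi fun _ : Fin m => Set.Icc (0:ℝ) 1) := by
  have hA := A.measurePreserving_unitAddTorusMulVec
    ((A.map _).mulVec_surjective_of_rank_eq (by simpa using hrank))
  have hF := (measurePreserving_add_left volume fun i => (b i : UnitAddCircle)).comp
    (hA.comp measurePreserving_coe_unitAddTorus)
  have hΨ : (fun (u : Fin p → ℝ) i => Int.fract ((A.map (Int.cast : ℤ → ℝ)).mulVec u i + b i)) =
      (fun y i => UnitAddCircle.fract (y i)) ∘
        ((fun y => (fun i => (b i : UnitAddCircle)) + y) ∘ A.unitAddTorusMulVec ∘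
          fun u j => (u j : UnitAddCircle)) := by
    funext u i
    simp [A.unitAddTorusMulVec_coe, ← UnitAddCircle.fract_coe, add_comm]
  rw [hΨ, ← Measure.map_map (by fun_prop) hF.measurable, hF.map_eq, map_fract_unitAddTorus]

theorem stmt_0 (m p : ℕ) (hm : 1 ≤ m) (hmp : m ≤ p)
    (A : Matrix (Fin m) (Fin p) ℤ) (b : Fin m → ℝ)
    (hrank : (A.map (Int.cast : ℤ → ℝ)).rank = m) :
    Measure.map
      (fun u : Fin p → ℝ => fun i : Fin m =>
        Int.fract ((A.map (Int.cast : ℤ → ℝ)).mulVec u i + b i))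
      (volume.restrict (Set.univ.pi fun _ : Fin p => Set.Icc (0:ℝ) 1))
    = volume.restrict (Set.univ.pi fun _ : Fin m => Set.Icc (0:ℝ) 1) :=
  stmt_0_general m p A b hrank
end

section
/- Let d ≥ 2, let s ∈ {0,1}^d, and let f : [0,1] → [0,∞) be measurable. Then the function c_f^s : [0,1]^d → [0,∞) defined by c_f^s(u) := f(frac(Σ_{j=1}^d ũ_j)) is a copula density — that is, for every j ∈ {1,…,d} and every u_j ∈ [0,1], ∫_{[0,1]^{d−1}} c_f^s(u) du_{−j} = 1, where du_{−j} denotes integration over all coordinates except the j-th — if and only if ∫₀¹ f(x) dx = 1. -/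
open MeasureTheory

section CopulaAux
open Set

lemma map_add_restrict (a : ℝ) (s : Set ℝ) :
    Measure.map (· + a) (volume.restrict ((· + a) ⁻¹' s)) = volume.restrict s := by
  have h := (MeasurableEquiv.addRight a).measurableEmbedding.restrict_map (volume : Measure ℝ) s
  have h2 : Measure.map (⇑(MeasurableEquiv.addRight a)) (volume : Measure ℝ) = volume :=
    Measure.IsAddRightInvariant.map_add_right_eq_self a
  rw [h2] at h
  exact h.symm

lemma fract_map1 (c : ℝ) :
    Measure.map (fun x => Int.fract (x + c)) (volume.restrict (Set.Ico (0:ℝ) 1))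
      = volume.restrict (Set.Ico (0:ℝ) 1) := by
  set r := Int.fract c with hrdef
  have hr0 : 0 ≤ r := Int.fract_nonneg c
  have hr1 : r < 1 := Int.fract_lt_one c
  have hfc : (fun x : ℝ => Int.fract (x + c)) = fun x => Int.fract (x + r) := by
    funext x
    have : x + c = x + r + (⌊c⌋ : ℤ) := by
      rw [hrdef]; unfold Int.fract; ring
    rw [this, Int.fract_add_intCast]
  rw [hfc]
  have hmeas : Measurable fun x : ℝ => Int.fract (x + r) :=
    measurable_fract.comp (measurable_id.add_const r)
  have hsplit : (volume.restrict (Set.Ico (0:ℝ) 1))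
      = volume.restrict (Set.Ico (0:ℝ) (1 - r)) + volume.restrict (Set.Ico (1-r) 1) := by
    rw [← Measure.restrict_union (Set.Ico_disjoint_Ico_same) measurableSet_Ico,
      Set.Ico_union_Ico_eq_Ico (by linarith) (by linarith)]
  rw [hsplit, Measure.map_add _ _ hmeas]
  have h1 : Measure.map (fun x : ℝ => Int.fract (x + r)) (volume.restrict (Set.Ico (0:ℝ) (1-r)))
      = volume.restrict (Set.Ico r 1) := by
    have hcong : (fun x : ℝ => Int.fract (x + r))
        =ᵐ[volume.restrict (Set.Ico (0:ℝ) (1-r))] (fun x => x + r) := by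
      filter_upwards [ae_restrict_mem measurableSet_Ico] with x hx
      exact Int.fract_eq_self.mpr ⟨by linarith [hx.1], by linarith [hx.2]⟩
    rw [Measure.map_congr hcong]
    have hpre : ((· + r) ⁻¹' Set.Ico r 1) = Set.Ico (0:ℝ) (1-r) := by
      ext x; simp only [Set.mem_preimage, Set.mem_Ico]; constructor <;> intro h <;>
        exact ⟨by linarith [h.1], by linarith [h.2]⟩
    rw [← hpre, map_add_restrict]
  have h2 : Measure.map (fun x : ℝ => Int.fract (x + r)) (volume.restrict (Set.Ico (1-r) 1))
      = volume.restrict (Set.Ico 0 r) := by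
    have hcong : (fun x : ℝ => Int.fract (x + r))
        =ᵐ[volume.restrict (Set.Ico (1-r) 1)] (fun x => x + (r - 1)) := by
      filter_upwards [ae_restrict_mem measurableSet_Ico] with x hx
      have : x + r = (x + (r - 1)) + (1 : ℤ) := by push_cast; ring
      rw [this, Int.fract_add_intCast]
      exact Int.fract_eq_self.mpr ⟨by linarith [hx.1], by linarith [hx.2]⟩
    rw [Measure.map_congr hcong]
    have hpre : ((· + (r-1)) ⁻¹' Set.Ico 0 r) = Set.Ico (1-r) 1 := by
      ext x; simp only [Set.mem_preimage, Set.mem_Ico]; constructor <;> intro h <;>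
        exact ⟨by linarith [h.1], by linarith [h.2]⟩
    rw [← hpre, map_add_restrict]
  rw [h1, h2, add_comm, ← Measure.restrict_union (Set.Ico_disjoint_Ico_same) measurableSet_Ico,
    Set.Ico_union_Ico_eq_Ico (by linarith) (by linarith)]
  exact hsplit



lemma restrict_Icc_eq_Ico : (volume.restrict (Set.Icc (0:ℝ) 1)) = volume.restrict (Set.Ico 0 1) :=
  (Measure.restrict_congr_set Ico_ae_eq_Icc).symm

lemma fract_map_plus (c : ℝ) :
    Measure.map (fun x => Int.fract (c + x)) (volume.restrict (Set.Icc (0:ℝ) 1))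
      = volume.restrict (Set.Ico (0:ℝ) 1) := by
  rw [restrict_Icc_eq_Ico]
  simpa [add_comm] using fract_map1 c

lemma fract_map_minus (c : ℝ) :
    Measure.map (fun x => Int.fract (c - x)) (volume.restrict (Set.Icc (0:ℝ) 1))
      = volume.restrict (Set.Ico (0:ℝ) 1) := by
  rw [restrict_Icc_eq_Ico]
  have hneg : Measure.map Neg.neg (volume.restrict (Set.Ico (0:ℝ) 1))
      = volume.restrict (Set.Ioc (-1:ℝ) 0) := by
    have h := (MeasurableEquiv.neg ℝ).measurableEmbedding.restrict_map (volume : Measure ℝ)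
      (Set.Ioc (-1:ℝ) 0)
    have h2 : Measure.map (⇑(MeasurableEquiv.neg ℝ)) (volume : Measure ℝ) = volume :=
      Measure.map_neg_eq_self volume
    rw [h2] at h
    have hpre : ((⇑(MeasurableEquiv.neg ℝ)) ⁻¹' Set.Ioc (-1:ℝ) 0) = Set.Ico (0:ℝ) 1 := by
      ext x
      simp only [MeasurableEquiv.neg_apply, Set.mem_preimage, Set.mem_Ioc, Set.mem_Ico]
      constructor <;> intro hh <;> exact ⟨by linarith [hh.1], by linarith [hh.2]⟩
    rw [hpre] at h
    exact h.symm
  have hcomp : (fun x : ℝ => Int.fract (c - x)) = (fun y : ℝ => Int.fract (y + c)) ∘ Neg.neg := by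
    funext x; simp [Function.comp, sub_eq_add_neg, add_comm]
  rw [hcomp, ← Measure.map_map (measurable_fract.comp' (measurable_add_const c))
    measurable_neg, hneg]
  have : (volume.restrict (Set.Ioc (-1:ℝ) 0)) = volume.restrict (Set.Ico (-1:ℝ) 0) := by
    rw [Measure.restrict_congr_set Ioc_ae_eq_Icc, Measure.restrict_congr_set Ico_ae_eq_Icc]
  rw [this]
  have hshift : volume.restrict (Set.Ico (-1:ℝ) 0)
      = Measure.map (· + (-1:ℝ)) (volume.restrict (Set.Ico (0:ℝ) 1)) := by
    have hpre : ((· + (-1:ℝ)) ⁻¹' Set.Ico (-1:ℝ) 0) = Set.Ico (0:ℝ) 1 := by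
      ext x; simp only [Set.mem_preimage, Set.mem_Ico]
      constructor <;> intro hh <;> exact ⟨by linarith [hh.1], by linarith [hh.2]⟩
    rw [← map_add_restrict (-1) (Set.Ico (-1:ℝ) 0), hpre]
  rw [hshift, Measure.map_map (measurable_fract.comp' (measurable_add_const c))
    (measurable_add_const (-1 : ℝ))]
  have : ((fun y : ℝ => Int.fract (y + c)) ∘ (· + (-1:ℝ)))
      = fun x : ℝ => Int.fract (x + (c - 1)) := by
    funext x; simp [Function.comp]; ring_nf
  rw [this]
  exact fract_map1 (c - 1)

lemma muIcc_prob : IsProbabilityMeasure (volume.restrict (Set.Icc (0:ℝ) 1)) :=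
  ⟨by simp [Real.volume_Icc]⟩

lemma pi_restrict (d : ℕ) :
    (volume : Measure (Fin d → ℝ)).restrict (Set.univ.pi fun _ => Set.Icc (0:ℝ) 1)
      = Measure.pi (fun _ : Fin d => volume.restrict (Set.Icc (0:ℝ) 1)) := by
  have := muIcc_prob
  refine (Measure.pi_eq (μ := fun _ : Fin d => volume.restrict (Set.Icc (0:ℝ) 1)) fun t ht => ?_).symm
  rw [Measure.restrict_apply (MeasurableSet.univ_pi ht), ← Set.pi_inter_distrib, volume_pi_pi]
  simp_rw [Measure.restrict_apply (ht _)]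

-- prob of pi measure instance check
example (d : ℕ) (i : Fin d) :
    IsProbabilityMeasure (Measure.pi (fun _ : {k : Fin d // ¬ k = i} =>
      volume.restrict (Set.Icc (0:ℝ) 1))) := by
  have := muIcc_prob
  infer_instance

lemma prod_map_aux {β : Type*} [MeasurableSpace β] (ν : Measure β) [IsProbabilityMeasure ν]
    (φ : ℝ × β → ℝ) (hφ : Measurable φ)
    (h : ∀ y, Measure.map (fun x => φ (x, y)) (volume.restrict (Set.Icc (0:ℝ) 1))
      = volume.restrict (Set.Ico (0:ℝ) 1)) :
    Measure.map φ ((volume.restrict (Set.Icc (0:ℝ) 1)).prod ν)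
      = volume.restrict (Set.Ico (0:ℝ) 1) := by
  have := muIcc_prob
  ext A hA
  rw [Measure.map_apply hφ hA, Measure.prod_apply_symm (hφ hA)]
  have : ∀ y, (volume.restrict (Set.Icc (0:ℝ) 1)) ((fun x => (x, y)) ⁻¹' (φ ⁻¹' A))
      = volume.restrict (Set.Ico (0:ℝ) 1) A := by
    intro y
    have hm : Measurable fun x => φ (x, y) := hφ.comp (measurable_id.prodMk measurable_const)
    have he : ((fun x => (x, y)) ⁻¹' (φ ⁻¹' A)) = (fun x => φ (x, y)) ⁻¹' A := rfl
    rw [he, ← Measure.map_apply hm hA, h y]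
  simp_rw [this]
  rw [lintegral_const, measure_univ, mul_one]


lemma key (d : ℕ) (hd : 2 ≤ d) (s : Fin d → Bool) (f : ℝ → ℝ)
    (hf_meas : Measurable f) (j : Fin d) (uj : ℝ) :
    (∫ u in Set.univ.pi (fun _ : Fin d => Set.Icc (0:ℝ) 1),
        f (Int.fract (∑ k : Fin d,
          (if s k then 1 - Function.update u j uj k else Function.update u j uj k))))
      = ∫ x in Set.Icc (0:ℝ) 1, f x := by
  have := muIcc_prob
  -- pick i ≠ j
  obtain ⟨i, hij⟩ : ∃ i : Fin d, i ≠ j := by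
    by_cases h : j = ⟨0, by omega⟩
    · exact ⟨⟨1, by omega⟩, by simp [h, Fin.ext_iff]⟩
    · exact ⟨⟨0, by omega⟩, fun hh => h hh.symm⟩
  set μ1 : Measure ℝ := volume.restrict (Set.Icc (0:ℝ) 1) with hμ1
  set T : (Fin d → ℝ) → ℝ := fun u => Int.fract (∑ k : Fin d,
      (if s k then 1 - Function.update u j uj k else Function.update u j uj k)) with hTdef
  have hupd : ∀ k : Fin d, Measurable fun u : Fin d → ℝ => Function.update u j uj k := by
    intro k
    by_cases hkj : k = j
    · subst hkj; simp only [Function.update_self]; exact measurable_const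
    · simp only [Function.update_of_ne hkj]; exact measurable_pi_apply k
  have hT : Measurable T := by
    apply measurable_fract.comp'
    apply Finset.measurable_sum
    intro k _
    by_cases hsk : s k <;> simp only [hsk, if_true, if_false]
    · exact (measurable_const.sub (hupd k))
    · exact hupd k
  set ν : Measure ({k : Fin d // ¬ k = i} → ℝ) := Measure.pi (fun _ => μ1) with hν
  have hνprob : IsProbabilityMeasure ν := by rw [hν]; infer_instance
  set E := MeasurableEquiv.piEquivPiSubtypeProd (fun _ : Fin d => ℝ) (· = i) with hE
  set Φ : ℝ × ({k : Fin d // ¬ k = i} → ℝ) → (Fin d → ℝ) :=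
    fun p => E.symm (fun _ => p.1, p.2) with hΦdef
  have hΦ : Measurable Φ :=
    E.symm.measurable.comp ((measurable_pi_lambda _ fun _ => measurable_fst).prodMk
      measurable_snd)
  -- Φ pushes μ1.prod ν to the pi measure
  have hmapΦ : Measure.map Φ (μ1.prod ν) = Measure.pi (fun _ : Fin d => μ1) := by
    refine (Measure.pi_eq fun t ht => ?_).symm
    rw [Measure.map_apply hΦ (MeasurableSet.univ_pi ht)]
    have hpre : Φ ⁻¹' (Set.univ.pi t)
        = (t i) ×ˢ (Set.univ.pi fun k : {k : Fin d // ¬ k = i} => t k) := by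
      ext p
      simp only [hΦdef, Set.mem_preimage, Set.mem_pi, Set.mem_univ, forall_true_left,
        Set.mem_prod, hE, MeasurableEquiv.piEquivPiSubtypeProd,
        MeasurableEquiv.symm, MeasurableEquiv.coe_mk, Equiv.piEquivPiSubtypeProd_symm_apply]
      constructor
      · intro h
        refine ⟨by simpa using h i, fun k => by simpa [k.2] using h k.1⟩
      · intro h k
        by_cases hk : k = i
        · subst hk; simpa using h.1
        · simpa [hk] using h.2 ⟨k, hk⟩
    rw [hpre, Measure.prod_prod, Measure.pi_pi]
    have : (∏ k : Fin d, μ1 (t k))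
        = μ1 (t i) * ∏ k : {k : Fin d // ¬ k = i}, μ1 (t k.1) := by
      rw [← Finset.mul_prod_erase Finset.univ _ (Finset.mem_univ i)]
      congr 1
      exact Finset.prod_subtype (p := fun k => ¬ k = i) (Finset.univ.erase i)
        (fun k => by simp [Finset.mem_erase]) (fun k => μ1 (t k))
    rw [this]
  -- sections
  have hsect : ∀ y, Measure.map (fun x => T (Φ (x, y))) μ1 = volume.restrict (Set.Ico (0:ℝ) 1) := by
    intro y
    set w : Fin d → ℝ := Φ (0, y) with hw
    have hup : ∀ x, Φ (x, y) = Function.update w i x := by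
      intro x
      funext k
      by_cases hk : k = i
      · subst hk
        simp [hΦdef, hE, Function.update_self, Equiv.piEquivPiSubtypeProd_symm_apply]
      · simp [hΦdef, hE, hw, Function.update_of_ne hk, Equiv.piEquivPiSubtypeProd_symm_apply, hk]
    set v : Fin d → ℝ := Function.update w j uj with hv
    set C0 : ℝ := ∑ k ∈ Finset.univ.erase i, (if s k then 1 - v k else v k) with hC0
    have hsum : ∀ x, (∑ k : Fin d, (if s k then 1 - Function.update (Φ (x,y)) j uj k
        else Function.update (Φ (x,y)) j uj k)) = (if s i then 1 - x else x) + C0 := by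
      intro x
      rw [hup x, Function.update_comm hij]
      rw [← Finset.add_sum_erase Finset.univ _ (Finset.mem_univ i)]
      congr 1
      · simp [Function.update_self]
      · apply Finset.sum_congr rfl
        intro k hk
        rw [Function.update_of_ne (Finset.ne_of_mem_erase hk)]
    cases hsi : s i
    · have heq : (fun x => T (Φ (x, y))) = fun x => Int.fract (C0 + x) := by
        funext x
        simp only [hTdef, hsum x, hsi, Bool.false_eq_true, if_false]
        congr 1; ring
      rw [heq]; exact fract_map_plus C0
    · have heq : (fun x => T (Φ (x, y))) = fun x => Int.fract ((C0 + 1) - x) := by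
        funext x
        simp only [hTdef, hsum x, hsi, if_true]
        congr 1; ring
      rw [heq]; exact fract_map_minus (C0 + 1)
  have hmapT : Measure.map T (Measure.pi (fun _ : Fin d => μ1))
      = volume.restrict (Set.Ico (0:ℝ) 1) := by
    rw [← hmapΦ, Measure.map_map hT hΦ]
    exact prod_map_aux ν (T ∘ Φ) (hT.comp hΦ) hsect
  calc (∫ u in Set.univ.pi (fun _ : Fin d => Set.Icc (0:ℝ) 1), f (T u))
      = ∫ u, f (T u) ∂(Measure.pi (fun _ : Fin d => μ1)) := by rw [← pi_restrict d]
    _ = ∫ z, f z ∂(Measure.map T (Measure.pi (fun _ : Fin d => μ1))) :=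
        (integral_map hT.aemeasurable hf_meas.aestronglyMeasurable).symm
    _ = ∫ x in Set.Ico (0:ℝ) 1, f x := by rw [hmapT]
    _ = ∫ x in Set.Icc (0:ℝ) 1, f x := by rw [restrict_Icc_eq_Ico]

end CopulaAux

theorem stmt_1 (d : ℕ) (hd : 2 ≤ d) (s : Fin d → Bool) (f : ℝ → ℝ)
    (hf_meas : Measurable f) (hf_nonneg : ∀ x ∈ Set.Icc (0:ℝ) 1, 0 ≤ f x) :
    (∀ j : Fin d, ∀ uj ∈ Set.Icc (0:ℝ) 1,
      ∫ u in Set.univ.pi (fun _ : Fin d => Set.Icc (0:ℝ) 1),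
        f (Int.fract (∑ k : Fin d,
          (if s k then 1 - Function.update u j uj k else Function.update u j uj k))) = 1)
    ↔ ∫ x in Set.Icc (0:ℝ) 1, f x = 1 := by
  constructor
  · intro h
    have h0 := h ⟨0, by omega⟩ 0 ⟨le_rfl, zero_le_one⟩
    rwa [key d hd s f hf_meas ⟨0, by omega⟩ 0] at h0
  · intro h j uj _
    rw [key d hd s f hf_meas j uj]
    exact h
end

section
/- Let d ≥ 2 and s ∈ {0,1}^d. If f and g are generators such that c_f^s(u) = c_g^s(u) for Lebesgue-almost every u ∈ [0,1]^d, then f(x) = g(x) for Lebesgue-almost every x ∈ [0,1]. -/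
/-! Reduced modulo 1, `u ↦ ∑ k, ũ k` becomes on the circle `ℝ/ℤ` a sum of independent coordinates
`± u k`, each Haar distributed, and adding an independent Haar-distributed summand yields a
Haar-distributed sum. Hence `T u := frac (∑ k, ũ k)` pushes Lebesgue measure on `[0,1]^d` forward
to Lebesgue measure on `[0,1]`, so `f ∘ T = g ∘ T` a.e. on the cube descends to `f = g` a.e. on
`[0,1]`. -/

open MeasureTheory

/-- A generator: a probability density on `[0,1]`. -/
def IsGenerator (f : ℝ → ℝ) : Prop :=
  Measurable f ∧ (∀ x ∈ Set.Icc (0:ℝ) 1, 0 ≤ f x) ∧ ∫ x in Set.Icc (0:ℝ) 1, f x = 1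

open Set

theorem measurePreserving_fst_add_comp_snd {G X : Type*} [AddGroup G] [MeasurableSpace G]
    [MeasurableAdd₂ G] [MeasurableSpace X] (μ : Measure G) [SFinite μ] [μ.IsAddRightInvariant]
    (ν : Measure X) [IsProbabilityMeasure ν] {φ : X → G} (hφ : Measurable φ) :
    MeasurePreserving (fun p : G × X => p.1 + φ p.2) (μ.prod ν) μ := by
  have hm : Measurable fun p : G × X => p.1 + φ p.2 := by fun_prop
  refine ⟨hm, Measure.ext fun A hA => ?_⟩
  rw [Measure.map_apply hm hA, Measure.prod_apply_symm (hm hA)]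
  calc ∫⁻ y, μ ((· + φ y) ⁻¹' A) ∂ν = ∫⁻ _, μ A ∂ν :=
        lintegral_congr fun y => measure_preimage_add_right μ (φ y) A
    _ = μ A := by simp

theorem measurePreserving_pi_sum {G : Type*} [AddCommGroup G] [MeasurableSpace G]
    [MeasurableAdd₂ G] {n : ℕ} (μ : Measure G) [IsProbabilityMeasure μ] [μ.IsAddRightInvariant] :
    MeasurePreserving (fun z : Fin (n + 1) → G => ∑ k, z k) (Measure.pi fun _ => μ) μ := by
  have := (measurePreserving_fst_add_comp_snd μ (Measure.pi fun _ : Fin n => μ)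
    (Finset.measurable_sum Finset.univ fun j _ => measurable_pi_apply j)).comp
    (measurePreserving_piFinSuccAbove (fun _ => μ) 0)
  convert this using 1
  funext z
  simp [Fin.sum_univ_succ, Fin.tail]

namespace UnitAddCircle

instance : IsProbabilityMeasure (volume : Measure UnitAddCircle) := ⟨UnitAddCircle.measure_univ⟩

theorem measurePreserving_coe_Ico :
    MeasurePreserving ((↑) : ℝ → UnitAddCircle) (volume.restrict (Ico 0 1)) volume := by
  rw [Measure.restrict_congr_set Ico_ae_eq_Ioc]
  simpa using UnitAddCircle.measurePreserving_mk 0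

theorem measurePreserving_coe_Icc :
    MeasurePreserving ((↑) : ℝ → UnitAddCircle) (volume.restrict (Icc 0 1)) volume := by
  rw [← Measure.restrict_congr_set Ico_ae_eq_Icc]
  exact measurePreserving_coe_Ico

theorem measurePreserving_equivIco :
    MeasurePreserving (fun z : UnitAddCircle => (AddCircle.equivIco 1 0 z : ℝ)) volume
      (volume.restrict (Icc 0 1)) := by
  have hm : Measurable fun z : UnitAddCircle => (AddCircle.equivIco 1 0 z : ℝ) :=
    measurable_subtype_coe.comp (AddCircle.measurableEquivIco 1 0).measurable
  refine ⟨hm, ?_⟩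
  rw [← measurePreserving_coe_Ico.map_eq, Measure.map_map hm AddCircle.measurable_mk',
    ← Measure.restrict_congr_set Ico_ae_eq_Icc]
  conv_rhs => rw [← Measure.map_id (μ := volume.restrict (Ico (0:ℝ) 1))]
  refine Measure.map_congr ?_
  filter_upwards [ae_restrict_mem measurableSet_Ico] with x hx
  simpa using AddCircle.equivIco_coe_of_mem (p := (1:ℝ)) (a := 0) (by simpa using hx)

theorem measurePreserving_coe_one_sub_Icc :
    MeasurePreserving (fun x : ℝ => ((1 - x : ℝ) : UnitAddCircle))
      (volume.restrict (Icc 0 1)) volume := by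
  convert (Measure.measurePreserving_neg (volume : Measure UnitAddCircle)).comp
    measurePreserving_coe_Icc using 1
  funext x
  simp

end UnitAddCircle

theorem measurePreserving_fract_sum_signed {n : ℕ} (s : Fin (n + 1) → Bool) :
    MeasurePreserving (fun u : Fin (n + 1) → ℝ => Int.fract (∑ k, if s k then 1 - u k else u k))
      (volume.restrict (univ.pi fun _ => Icc 0 1)) (volume.restrict (Icc 0 1)) := by
  have hcoord : ∀ k, MeasurePreserving
      (fun x : ℝ => ((if s k then 1 - x else x : ℝ) : UnitAddCircle))
      (volume.restrict (Icc 0 1)) volume := fun k => by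
    cases s k
    · exact UnitAddCircle.measurePreserving_coe_Icc
    · exact UnitAddCircle.measurePreserving_coe_one_sub_Icc
  have := UnitAddCircle.measurePreserving_equivIco.comp
    ((measurePreserving_pi_sum volume).comp (measurePreserving_pi _ _ hcoord))
  have hT : (fun u : Fin (n + 1) → ℝ => Int.fract (∑ k, if s k then 1 - u k else u k)) =
      (fun z : UnitAddCircle => (AddCircle.equivIco 1 0 z : ℝ)) ∘ (fun z => ∑ k, z k) ∘
        fun u k => ((if s k then 1 - u k else u k : ℝ) : UnitAddCircle) := by
    funext u
    simp [← QuotientAddGroup.mk_sum]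
  rwa [hT, volume_pi, Measure.restrict_pi_pi]

theorem stmt_2 (d : ℕ) (hd : 2 ≤ d) (s : Fin d → Bool) (f g : ℝ → ℝ)
    (hf : IsGenerator f) (hg : IsGenerator g)
    (h : ∀ᵐ u ∂(volume.restrict (Set.univ.pi fun _ : Fin d => Set.Icc (0:ℝ) 1)),
      f (Int.fract (∑ k : Fin d, if s k then 1 - u k else u k))
        = g (Int.fract (∑ k : Fin d, if s k then 1 - u k else u k))) :
    ∀ᵐ x ∂(volume.restrict (Set.Icc (0:ℝ) 1)), f x = g x := by
  obtain ⟨n, rfl⟩ : ∃ n, d = n + 1 := ⟨d - 1, by omega⟩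
  have hT := measurePreserving_fract_sum_signed s
  rw [← hT.map_eq]
  exact (ae_map_iff hT.measurable.aemeasurable (measurableSet_eq_fun hf.1 hg.1)).2 h
end

section
/- Let d ≥ 2, s ∈ {0,1}^d, let f be a generator, and let U = (U_1,…,U_d) be a random vector in [0,1]^d whose law has density c_f^s with respect to Lebesgue measure. Then: (i) the random variable Y := frac(Σ_{k=1}^d Ũ_k), where Ũ_k := U_k if s_k = 0 and Ũ_k := 1 − U_k if s_k = 1, has density f; (ii) for each j ∈ {1,…,d}, the random vector U_{−j} (obtained by deleting the j-th component of U) is uniformly distributed on [0,1]^{d−1}; and (iii) Y and U_{−j} are independent. -/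
open MeasureTheory

/-!
Split `u ∈ [0,1]^d` into its `j`-th coordinate `x` and the remaining coordinates `y`. For fixed
`y`, the map `x ↦ frac(x̃ + c(y))`, where `c(y)` is the sum of the other reflected coordinates, is a
rotation of the circle `ℝ/ℤ` (preceded by the reflection `x ↦ 1 - x` when `s_j = 1`), so it
preserves Lebesgue measure on `[0,1]`. Hence `u ↦ (Y, U₋ⱼ)` carries the uniform measure on the
cube to the product of the uniform measures. The density of the law of `U` is a function of `Y`
alone, so this map carries the law of `U` to `(f · λ) ⊗ λ^{d-1}`, and (i)–(iii) are the two
marginals and the product form of this measure.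
-/

open Set
open scoped ENNReal

theorem MeasureTheory.MeasurePreserving.withDensity_comp {α β : Type*} [MeasurableSpace α]
    [MeasurableSpace β] {μ : Measure α} {ν : Measure β} {T : α → β}
    (hT : MeasurePreserving T μ ν) {g : β → ℝ≥0∞} (hg : Measurable g) :
    MeasurePreserving T (μ.withDensity (g ∘ T)) (ν.withDensity g) := by
  refine ⟨hT.measurable, ?_⟩
  ext s hs
  rw [Measure.map_apply hT.measurable hs, withDensity_apply _ (hT.measurable hs),
    withDensity_apply _ hs]
  exact hT.setLIntegral_comp_preimage hs hg

theorem MeasureTheory.MeasurePreserving.skew_product_left {α α' β : Type*} [MeasurableSpace α]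
    [MeasurableSpace α'] [MeasurableSpace β] {μ : Measure α} {μ' : Measure α'} {ν : Measure β}
    [SFinite μ] [SFinite μ'] [SFinite ν] {g : β → α → α'} (hgm : Measurable (Function.uncurry g))
    (hg : ∀ b, MeasurePreserving (g b) μ μ') :
    MeasurePreserving (fun p : α × β => (g p.2 p.1, p.2)) (μ.prod ν) (μ'.prod ν) :=
  Measure.measurePreserving_swap.comp <|
    ((MeasurePreserving.id ν).skew_product hgm (ae_of_all _ fun b => (hg b).map_eq)).comp
      Measure.measurePreserving_swap

theorem measurePreserving_eval_prod_restrict_ne {ι α : Type*} [Fintype ι] [DecidableEq ι]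
    [MeasurableSpace α] (ν : Measure α) [SigmaFinite ν] (j : ι) :
    MeasurePreserving (fun u : ι → α => (u j, Subtype.restrict (· ≠ j) u))
      (Measure.pi fun _ => ν) (ν.prod (Measure.pi fun _ : {k // k ≠ j} => ν)) := by
  refine MeasurePreserving.comp
    (g := Prod.map (MeasurableEquiv.piUnique fun _ : {k // k = j} => α) id)
    (f := MeasurableEquiv.piEquivPiSubtypeProd (fun _ => α) (· = j))
    ((measurePreserving_piUnique fun _ : {k // k = j} => ν).prod (.id _)) ?_
  -- `convert` reconciles the two `Fintype {k // k = j}` instances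
  convert measurePreserving_piEquivPiSubtypeProd (fun _ : ι => ν) (· = j)

instance isProbabilityMeasure_volume_restrict_unitCube {ι : Type*} [Fintype ι] :
    IsProbabilityMeasure (volume.restrict (univ.pi fun _ : ι => Icc (0 : ℝ) 1)) :=
  ⟨by simp [Real.volume_Icc_pi]⟩

lemma measurePreserving_one_sub_Icc :
    MeasurePreserving (fun x : ℝ => 1 - x) (volume.restrict (Icc 0 1))
      (volume.restrict (Icc 0 1)) := by
  have h := (Measure.measurePreserving_sub_left volume (1 : ℝ)).restrict_preimage
    (measurableSet_Icc (a := 0) (b := 1))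
  rwa [preimage_const_sub_Icc, sub_zero, sub_self] at h

lemma measurePreserving_fract_add_Icc (c : ℝ) :
    MeasurePreserving (fun x : ℝ => Int.fract (x + c)) (volume.restrict (Icc 0 1))
      (volume.restrict (Icc 0 1)) := by
  rw [← Measure.restrict_congr_set Ico_ae_eq_Icc]
  have hmk : MeasurePreserving ((↑) : ℝ → UnitAddCircle) (volume.restrict (Ico 0 1)) := by
    rw [Measure.restrict_congr_set Ico_ae_eq_Ioc]
    simpa using UnitAddCircle.measurePreserving_mk 0
  let φ : UnitAddCircle → ℝ := fun z => (AddCircle.equivIco 1 0 z : ℝ)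
  have hφ_mk (x : ℝ) : φ x = Int.fract x := by simp [φ]
  have hφ : MeasurePreserving φ volume (volume.restrict (Ico 0 1)) := by
    have hφm : Measurable φ :=
      measurable_subtype_coe.comp (AddCircle.measurableEquivIco 1 0).measurable
    refine ⟨hφm, ?_⟩
    rw [← hmk.map_eq, Measure.map_map hφm hmk.measurable]
    conv_rhs => rw [← Measure.map_id (μ := volume.restrict (Ico (0 : ℝ) 1))]
    refine Measure.map_congr (ae_restrict_of_forall_mem measurableSet_Ico fun x hx => ?_)
    simp [hφ_mk, Int.fract_eq_self.2 hx]
  convert hφ.comp ((measurePreserving_add_right volume (c : UnitAddCircle)).comp hmk) using 1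
  ext x
  simp [← hφ_mk]

def reflectIf (b : Bool) (x : ℝ) : ℝ :=
  if b then 1 - x else x

@[fun_prop]
lemma measurable_reflectIf (b : Bool) : Measurable (reflectIf b) := by
  cases b
  · exact measurable_id
  · exact measurable_const.sub measurable_id

lemma measurePreserving_fract_reflectIf_add (b : Bool) (c : ℝ) :
    MeasurePreserving (fun x : ℝ => Int.fract (reflectIf b x + c))
      (volume.restrict (Icc 0 1)) (volume.restrict (Icc 0 1)) := by
  cases b
  · exact measurePreserving_fract_add_Icc c
  · exact (measurePreserving_fract_add_Icc c).comp measurePreserving_one_sub_Icc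

section WrappedSum

variable {ι : Type*} [Fintype ι]

noncomputable def wrappedSum (s : ι → Bool) (u : ι → ℝ) : ℝ :=
  Int.fract (∑ k, reflectIf (s k) (u k))

lemma wrappedSum_eq_fract_add [DecidableEq ι] (s : ι → Bool) (j : ι) (u : ι → ℝ) :
    wrappedSum s u =
      Int.fract (reflectIf (s j) (u j) + ∑ k : {k // k ≠ j}, reflectIf (s k) (u k)) := by
  rw [wrappedSum, Fintype.sum_eq_add_sum_subtype_ne _ j]

theorem measurePreserving_wrappedSum_restrict_ne [DecidableEq ι] (s : ι → Bool) (j : ι) :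
    MeasurePreserving (fun u => (wrappedSum s u, Subtype.restrict (· ≠ j) u))
      (volume.restrict (univ.pi fun _ : ι => Icc 0 1))
      ((volume.restrict (Icc 0 1)).prod
        (volume.restrict (univ.pi fun _ : {k // k ≠ j} => Icc 0 1))) := by
  simp only [volume_pi, Measure.restrict_pi_pi]
  have hskew := MeasurePreserving.skew_product_left
    (g := fun (y : {k // k ≠ j} → ℝ) x =>
      Int.fract (reflectIf (s j) x + ∑ k : {k // k ≠ j}, reflectIf (s k) (y k)))
    (ν := Measure.pi fun _ => volume.restrict (Icc 0 1))
    (by fun_prop) fun y => measurePreserving_fract_reflectIf_add _ _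
  convert hskew.comp (measurePreserving_eval_prod_restrict_ne _ j) using 1
  · rfl
  · funext u
    simp [wrappedSum_eq_fract_add s j]

theorem measurePreserving_wrappedSum_restrict_ne_withDensity [DecidableEq ι] (s : ι → Bool)
    (j : ι) {h : ℝ → ℝ≥0∞} (hh : Measurable h) :
    MeasurePreserving (fun u => (wrappedSum s u, Subtype.restrict (· ≠ j) u))
      ((volume.restrict (univ.pi fun _ : ι => Icc 0 1)).withDensity fun u => h (wrappedSum s u))
      (((volume.restrict (Icc 0 1)).withDensity h).prod
        (volume.restrict (univ.pi fun _ : {k // k ≠ j} => Icc 0 1))) := by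
  rw [prod_withDensity_left hh]
  exact (measurePreserving_wrappedSum_restrict_ne s j).withDensity_comp
    (g := fun p => h p.1) (hh.comp measurable_fst)

end WrappedSum

lemma IsGenerator.isProbabilityMeasure {f : ℝ → ℝ} (hf : IsGenerator f) :
    IsProbabilityMeasure
      ((volume.restrict (Icc 0 1)).withDensity fun x => ENNReal.ofReal (f x)) := by
  obtain ⟨-, hf_nonneg, hf_one⟩ := hf
  refine ⟨?_⟩
  rw [withDensity_apply _ MeasurableSet.univ, Measure.restrict_univ,
    ← ofReal_integral_eq_lintegral_ofReal (Integrable.of_integral_ne_zero (by simp [hf_one]))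
      (ae_restrict_of_forall_mem measurableSet_Icc hf_nonneg), hf_one, ENNReal.ofReal_one]

theorem stmt_3_general (d : ℕ) (s : Fin d → Bool) (f : ℝ → ℝ) (hf : IsGenerator f)
    (μ : Measure (Fin d → ℝ))
    (hμ : μ = (volume.restrict (Set.univ.pi fun _ : Fin d => Set.Icc (0:ℝ) 1)).withDensity
      (fun u => ENNReal.ofReal (f (Int.fract (∑ k : Fin d, if s k then 1 - u k else u k)))))
    (j : Fin d) :
    -- (i) the wrapped sum has density `f`
    (Measure.map (fun u : Fin d → ℝ => Int.fract (∑ k : Fin d, if s k then 1 - u k else u k)) μ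
       = (volume.restrict (Set.Icc (0:ℝ) 1)).withDensity (fun x => ENNReal.ofReal (f x)))
    -- (ii) `U₋ⱼ` is uniform on `[0,1]^{d-1}`
    ∧ (Measure.map (fun (u : Fin d → ℝ) (k : {k : Fin d // k ≠ j}) => u k.1) μ
       = volume.restrict (Set.univ.pi fun _ : {k : Fin d // k ≠ j} => Set.Icc (0:ℝ) 1))
    -- (iii) the wrapped sum and `U₋ⱼ` are independent
    ∧ (Measure.map (fun u : Fin d → ℝ =>
         (Int.fract (∑ k : Fin d, if s k then 1 - u k else u k),
          fun k : {k : Fin d // k ≠ j} => u k.1)) μ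
       = (Measure.map (fun u : Fin d → ℝ =>
            Int.fract (∑ k : Fin d, if s k then 1 - u k else u k)) μ).prod
           (Measure.map (fun (u : Fin d → ℝ) (k : {k : Fin d // k ≠ j}) => u k.1) μ)) := by
  have := hf.isProbabilityMeasure
  have hjoint := hμ ▸ measurePreserving_wrappedSum_restrict_ne_withDensity s j
    (h := fun x => ENNReal.ofReal (f x)) (ENNReal.measurable_ofReal.comp hf.1)
  have hY := (measurePreserving_fst.comp hjoint).map_eq
  have hP := (measurePreserving_snd.comp hjoint).map_eq
  exact ⟨hY, hP, hjoint.map_eq.trans (congrArg₂ Measure.prod hY hP).symm⟩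

theorem stmt_3 (d : ℕ) (hd : 2 ≤ d) (s : Fin d → Bool) (f : ℝ → ℝ) (hf : IsGenerator f)
    (μ : Measure (Fin d → ℝ))
    (hμ : μ = (volume.restrict (Set.univ.pi fun _ : Fin d => Set.Icc (0:ℝ) 1)).withDensity
      (fun u => ENNReal.ofReal (f (Int.fract (∑ k : Fin d, if s k then 1 - u k else u k)))))
    (j : Fin d) :
    -- (i) the wrapped sum has density `f`
    (Measure.map (fun u : Fin d → ℝ => Int.fract (∑ k : Fin d, if s k then 1 - u k else u k)) μ
       = (volume.restrict (Set.Icc (0:ℝ) 1)).withDensity (fun x => ENNReal.ofReal (f x)))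
    -- (ii) `U₋ⱼ` is uniform on `[0,1]^{d-1}`
    ∧ (Measure.map (fun (u : Fin d → ℝ) (k : {k : Fin d // k ≠ j}) => u k.1) μ
       = volume.restrict (Set.univ.pi fun _ : {k : Fin d // k ≠ j} => Set.Icc (0:ℝ) 1))
    -- (iii) the wrapped sum and `U₋ⱼ` are independent
    ∧ (Measure.map (fun u : Fin d → ℝ =>
         (Int.fract (∑ k : Fin d, if s k then 1 - u k else u k),
          fun k : {k : Fin d // k ≠ j} => u k.1)) μ
       = (Measure.map (fun u : Fin d → ℝ =>
            Int.fract (∑ k : Fin d, if s k then 1 - u k else u k)) μ).prod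
           (Measure.map (fun (u : Fin d → ℝ) (k : {k : Fin d // k ≠ j}) => u k.1) μ)) :=
  stmt_3_general d s f hf μ hμ j
end

section
/- Let d ≥ 2, s ∈ {0,1}^d, let f be a generator, and let U = (U_1,…,U_d) be a random vector in [0,1]^d whose law has density c_f^s with respect to Lebesgue measure. Then for every t ∈ {0,1}^d with t ∉ {s, 1−s} (where 1−s denotes the componentwise complement of s), the random variable frac(Σ_{j=1}^d (−1)^{t_j} U_j) is uniformly distributed on [0,1]. -/
open MeasureTheory

/-!
With `σ = boolSign`, put `q = σ ∘ s` and `r = σ ∘ t`, so that `Σ ũ_j ≡ q·u (mod 1)` and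
`Σ (-1)^{t_j} u_j = r·u`. Since `t ∉ {s, 1 - s}` there are coordinates `a` with
`r_a = q_a` and `b` with `r_b ≠ q_b`. For a 1-periodic `g` and a nonzero integer `m`,
`∫₀¹ g(c + m x) dx = ∫₀¹ g` does not depend on `c`; integrating out `u_a` and then `u_b` therefore
shows that `q·u` and `(r - q)·u` are independent and uniform modulo 1 under Lebesgue measure on the
cube. The density `c_f^s` is a function of `q·u`, so it only reweights `q·u`, and
`r·u = q·u + (r - q)·u` is, modulo 1, the sum of a variable and an independent uniform one.
-/

open Set Function
open scoped ENNReal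

theorem Function.Periodic.lintegral_Icc_comp_add_intCast_mul {g : ℝ → ℝ≥0∞} {T : ℝ} (hT : 0 < T)
    (hg : Measurable g) (hper : Periodic g T) {m : ℤ} (hm : m ≠ 0) (c : ℝ) :
    ∫⁻ x in Icc 0 T, g (c + m * x) = ∫⁻ x in Icc 0 T, g x := by
  have := Fact.mk hT
  have hIcc : (volume : Measure ℝ).restrict (Icc 0 T) = volume.restrict (Ioc 0 (0 + T)) := by
    rw [zero_add]; exact (Measure.restrict_congr_set Ioc_ae_eq_Icc).symm
  have hG : Measurable hper.lift := QuotientAddGroup.measurable_from_quotient.2 hg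
  have hmk := AddCircle.measurePreserving_mk T 0
  have hrot : MeasurePreserving (fun q : AddCircle T => (c : AddCircle T) + m • q) :=
    (measurePreserving_add_left volume _).comp (Measure.measurePreserving_zsmul volume hm)
  calc ∫⁻ x in Icc 0 T, g (c + m * x)
      = ∫⁻ x in Ioc 0 (0 + T), hper.lift ((c : AddCircle T) + m • (x : AddCircle T)) := by
        rw [hIcc]
        refine lintegral_congr fun x => ?_
        rw [← hper.lift_coe, ← zsmul_eq_mul]
        rfl
    _ = ∫⁻ q, hper.lift ((c : AddCircle T) + m • q) :=
        hmk.lintegral_comp (hG.comp (measurable_const_add _ |>.comp (measurable_const_smul m)))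
    _ = ∫⁻ q, hper.lift q := hrot.lintegral_comp hG
    _ = ∫⁻ x in Icc 0 T, g x := by
        rw [← hmk.lintegral_comp hG, hIcc]
        rfl

theorem lintegral_Icc_comp_fract (g : ℝ → ℝ≥0∞) :
    ∫⁻ x in Icc (0:ℝ) 1, g (Int.fract x) = ∫⁻ x in Icc (0:ℝ) 1, g x := by
  rw [← Measure.restrict_congr_set Ico_ae_eq_Icc]
  exact setLIntegral_congr_fun measurableSet_Ico fun x hx => by rw [Int.fract_eq_self.2 hx]

theorem lintegral_Icc_lintegral_Icc_mul_comp_add {g h : ℝ → ℝ≥0∞} (hg : Measurable g)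
    (hh : Measurable h) (hper : Periodic h 1) :
    ∫⁻ z in Icc (0:ℝ) 1, ∫⁻ y in Icc (0:ℝ) 1, g y * h (y + z)
      = (∫⁻ y in Icc (0:ℝ) 1, g y) * ∫⁻ z in Icc (0:ℝ) 1, h z := by
  rw [lintegral_lintegral_swap ((hg.comp measurable_snd).mul
    (hh.comp (measurable_snd.add measurable_fst))).aemeasurable, ← lintegral_mul_const _ hg]
  refine lintegral_congr fun y => ?_
  have hshift := hper.lintegral_Icc_comp_add_intCast_mul one_pos hh one_ne_zero y
  simp only [Int.cast_one, one_mul] at hshift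
  rw [lintegral_const_mul _ (by fun_prop), hshift]

instance : IsProbabilityMeasure ((volume : Measure ℝ).restrict (Icc (0:ℝ) 1)) :=
  ⟨by simp⟩

section Product

variable {ι : Type*} [Fintype ι] [DecidableEq ι]

theorem lintegral_pi_eq_lintegral_lintegral_update {X : ι → Type*} [∀ i, MeasurableSpace (X i)]
    {μ : ∀ i, Measure (X i)} [∀ i, SigmaFinite (μ i)] {F : (∀ i, X i) → ℝ≥0∞} (hF : Measurable F)
    (i : ι) [IsProbabilityMeasure (μ i)] :
    ∫⁻ x, F x ∂Measure.pi μ = ∫⁻ x, ∫⁻ y, F (update x i y) ∂μ i ∂Measure.pi μ := by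
  set G : (∀ i, X i) → ℝ≥0∞ := fun x => ∫⁻ y, F (update x i y) ∂μ i
  have hG : Measurable G := (hF.comp measurable_update').lintegral_prod_right'
  have hGi : ∀ x y, G (update x i y) = G x := fun x y => by simp only [G, update_idem]
  rcases isEmpty_or_nonempty (∀ i, X i) with hX | hX
  · simp [Subsingleton.elim (Measure.pi μ) 0]
  obtain ⟨x₀⟩ := hX
  rw [lintegral_eq_lmarginal_univ x₀, lintegral_eq_lmarginal_univ x₀,
    ← Finset.insert_erase (Finset.mem_univ i), lmarginal_insert' _ hF (Finset.notMem_erase i _),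
    lmarginal_insert' _ hG (Finset.notMem_erase i _)]
  simp only [hGi, lintegral_const, measure_univ, mul_one, G]

theorem sum_mul_update (c : ι → ℝ) (x : ι → ℝ) (i : ι) (y : ℝ) :
    ∑ j, c j * update x i y j = c i * y + ∑ j ∈ Finset.univ.erase i, c j * x j := by
  rw [← Finset.add_sum_erase _ _ (Finset.mem_univ i), update_self]
  congr 1
  exact Finset.sum_congr rfl fun j hj => by rw [update_of_ne (Finset.ne_of_mem_erase hj)]

theorem sum_mul_update_of_eq_zero {c : ι → ℝ} {i : ι} (hc : c i = 0) (x : ι → ℝ) (y : ℝ) :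
    ∑ j, c j * update x i y j = ∑ j, c j * x j := by
  have hx := sum_mul_update c x i (x i)
  rw [update_eq_self] at hx
  rw [sum_mul_update, hx, hc, zero_mul, zero_mul]

theorem Function.Periodic.lintegral_Icc_comp_sum_mul_update {g : ℝ → ℝ≥0∞} (hg : Measurable g)
    (hper : Periodic g 1) {c : ι → ℤ} {i : ι} (hc : c i ≠ 0) (x : ι → ℝ) :
    ∫⁻ y in Icc (0:ℝ) 1, g (∑ j, (c j : ℝ) * update x i y j) = ∫⁻ y in Icc (0:ℝ) 1, g y := by
  simp_rw [sum_mul_update, add_comm _ (∑ j ∈ Finset.univ.erase i, _)]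
  exact hper.lintegral_Icc_comp_add_intCast_mul one_pos hg hc _

theorem lintegral_pi_Icc_comp_sum_mul_sum_mul {H : ℝ → ℝ → ℝ≥0∞} (hH : Measurable (uncurry H))
    (hH₁ : ∀ y, Periodic (H · y) 1) (hH₂ : ∀ z, Periodic (H z) 1) {p q : ι → ℤ} {a b : ι}
    (hpa : p a = 0) (hqa : q a ≠ 0) (hpb : p b ≠ 0) :
    ∫⁻ x, H (∑ j, (p j : ℝ) * x j) (∑ j, (q j : ℝ) * x j)
        ∂(Measure.pi fun _ : ι => volume.restrict (Icc (0:ℝ) 1))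
      = ∫⁻ z in Icc (0:ℝ) 1, ∫⁻ y in Icc (0:ℝ) 1, H z y := by
  set ν := Measure.pi fun _ : ι => volume.restrict (Icc (0:ℝ) 1)
  set K : ℝ → ℝ≥0∞ := fun z => ∫⁻ y in Icc (0:ℝ) 1, H z y
  have hK : Measurable K := hH.lintegral_prod_right'
  have hKper : Periodic K 1 := fun z => by simp only [K, hH₁ _ z]
  have hpa' : (p a : ℝ) = 0 := by exact_mod_cast hpa
  calc _ = ∫⁻ x, (∫⁻ y in Icc (0:ℝ) 1, H (∑ j, (p j : ℝ) * update x a y j)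
          (∑ j, (q j : ℝ) * update x a y j)) ∂ν :=
        lintegral_pi_eq_lintegral_lintegral_update (by fun_prop) a
    _ = ∫⁻ x, K (∑ j, (p j : ℝ) * x j) ∂ν := by
        simp_rw [sum_mul_update_of_eq_zero (c := fun j => (p j : ℝ)) hpa']
        exact lintegral_congr fun x => (hH₂ _).lintegral_Icc_comp_sum_mul_update
          (hH.comp measurable_prodMk_left) hqa x
    _ = ∫⁻ x, (∫⁻ y in Icc (0:ℝ) 1, K (∑ j, (p j : ℝ) * update x b y j)) ∂ν :=
        lintegral_pi_eq_lintegral_lintegral_update (by fun_prop) b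
    _ = ∫⁻ z in Icc (0:ℝ) 1, K z := by
        simp only [hKper.lintegral_Icc_comp_sum_mul_update hK hpb, lintegral_const, measure_univ,
          mul_one]

theorem lintegral_pi_Icc_mul_comp_sum_mul_sum_mul {g h : ℝ → ℝ≥0∞} (hg : Measurable g)
    (hgper : Periodic g 1) (hh : Measurable h) (hhper : Periodic h 1) {q r : ι → ℤ} {a b : ι}
    (hqa : q a ≠ 0) (hra : r a = q a) (hrb : r b ≠ q b) :
    ∫⁻ x, g (∑ j, (q j : ℝ) * x j) * h (∑ j, (r j : ℝ) * x j)
        ∂(Measure.pi fun _ : ι => volume.restrict (Icc (0:ℝ) 1))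
      = (∫⁻ y in Icc (0:ℝ) 1, g y) * ∫⁻ z in Icc (0:ℝ) 1, h z := by
  have hsplit : ∀ x : ι → ℝ,
      ∑ j, (r j : ℝ) * x j = ∑ j, (q j : ℝ) * x j + ∑ j, ((r - q) j : ℝ) * x j := fun x => by
    rw [← Finset.sum_add_distrib]
    exact Finset.sum_congr rfl fun j _ => by rw [Pi.sub_apply, Int.cast_sub]; ring
  simp_rw [hsplit]
  rw [← lintegral_Icc_lintegral_Icc_mul_comp_add hg hh hhper]
  refine lintegral_pi_Icc_comp_sum_mul_sum_mul (H := fun z y => g y * h (y + z)) (by fun_prop)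
    (fun y z => by dsimp only; rw [← add_assoc, hhper]) (fun z y => ?_) (by simp [hra]) hqa
    (by simpa [sub_eq_zero] using hrb)
  dsimp only
  rw [hgper, add_right_comm, hhper]

end Product

def boolSign (b : Bool) : ℤ := (-1) ^ b.toNat

theorem boolSign_ne_zero (b : Bool) : boolSign b ≠ 0 :=
  pow_ne_zero _ (by norm_num)

theorem boolSign_injective : Injective boolSign := by
  intro b b' h
  cases b <;> cases b' <;> simp_all [boolSign]

theorem sum_ite_neg_eq_sum_boolSign_mul {ι : Type*} [Fintype ι] (t : ι → Bool) (u : ι → ℝ) :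
    (∑ j, if t j then -(u j) else u j) = ∑ j, (boolSign (t j) : ℝ) * u j :=
  Finset.sum_congr rfl fun j _ => by cases t j <;> simp [boolSign]

theorem fract_sum_ite_one_sub_eq {ι : Type*} [Fintype ι] (s : ι → Bool) (u : ι → ℝ) :
    Int.fract (∑ k, if s k then 1 - u k else u k)
      = Int.fract (∑ k, (boolSign (s k) : ℝ) * u k) := by
  have h : (∑ k, if s k then 1 - u k else u k)
      = ∑ k, (boolSign (s k) : ℝ) * u k + ((∑ k, if s k then (1:ℤ) else 0 : ℤ) : ℝ) := by
    push_cast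
    rw [← Finset.sum_add_distrib]
    exact Finset.sum_congr rfl fun k _ => by cases s k <;> simp [boolSign]; ring
  rw [h, Int.fract_add_intCast]

theorem IsGenerator.lintegral_ofReal_eq_one {f : ℝ → ℝ} (hf : IsGenerator f) :
    ∫⁻ x in Icc (0:ℝ) 1, ENNReal.ofReal (f x) = 1 := by
  obtain ⟨-, hnn, hint⟩ := hf
  have hi : Integrable f (volume.restrict (Icc 0 1)) :=
    Integrable.of_integral_ne_zero (by rw [hint]; exact one_ne_zero)
  rw [← ofReal_integral_eq_lintegral_ofReal hi
    ((ae_restrict_iff' measurableSet_Icc).2 (ae_of_all _ hnn)), hint, ENNReal.ofReal_one]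

theorem stmt_4_general (d : ℕ) (s : Fin d → Bool) (f : ℝ → ℝ) (hf : IsGenerator f)
    (μ : Measure (Fin d → ℝ))
    (hμ : μ = (volume.restrict (Set.univ.pi fun _ : Fin d => Set.Icc (0:ℝ) 1)).withDensity
      (fun u => ENNReal.ofReal (f (Int.fract (∑ k : Fin d, if s k then 1 - u k else u k)))))
    (t : Fin d → Bool) (ht1 : t ≠ s) (ht2 : t ≠ fun j => !(s j)) :
    Measure.map (fun u : Fin d → ℝ => Int.fract (∑ j : Fin d, if t j then -(u j) else u j)) μ
      = volume.restrict (Set.Icc (0:ℝ) 1) := by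
  obtain ⟨a, hta⟩ : ∃ a, t a = s a := by
    obtain ⟨a, ha⟩ := Function.ne_iff.mp ht2
    exact ⟨a, by simpa using ha⟩
  obtain ⟨b, htb⟩ := Function.ne_iff.mp ht1
  have hfm : Measurable f := hf.1
  simp_rw [sum_ite_neg_eq_sum_boolSign_mul, fract_sum_ite_one_sub_eq] at hμ ⊢
  subst hμ
  refine Measure.ext_of_lintegral _ fun φ hφ => ?_
  rw [lintegral_map hφ (by fun_prop), lintegral_withDensity_eq_lintegral_mul _ (by fun_prop)
    (by fun_prop), volume_pi, Measure.restrict_pi_pi]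
  calc _ = (∫⁻ y in Icc (0:ℝ) 1, ENNReal.ofReal (f (Int.fract y)))
        * ∫⁻ z in Icc (0:ℝ) 1, φ (Int.fract z) :=
        lintegral_pi_Icc_mul_comp_sum_mul_sum_mul (q := fun j => boolSign (s j))
          (r := fun j => boolSign (t j)) (by fun_prop)
          ((Int.fract_periodic ℝ).comp fun y => ENNReal.ofReal (f y)) (by fun_prop)
          ((Int.fract_periodic ℝ).comp φ) (boolSign_ne_zero _) (congrArg boolSign hta)
          (boolSign_injective.ne htb)
    _ = ∫⁻ x in Icc (0:ℝ) 1, φ x := by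
        rw [lintegral_Icc_comp_fract φ, lintegral_Icc_comp_fract fun y => ENNReal.ofReal (f y),
          hf.lintegral_ofReal_eq_one, one_mul]

theorem stmt_4 (d : ℕ) (hd : 2 ≤ d) (s : Fin d → Bool) (f : ℝ → ℝ) (hf : IsGenerator f)
    (μ : Measure (Fin d → ℝ))
    (hμ : μ = (volume.restrict (Set.univ.pi fun _ : Fin d => Set.Icc (0:ℝ) 1)).withDensity
      (fun u => ENNReal.ofReal (f (Int.fract (∑ k : Fin d, if s k then 1 - u k else u k)))))
    (t : Fin d → Bool) (ht1 : t ≠ s) (ht2 : t ≠ fun j => !(s j)) :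
    Measure.map (fun u : Fin d → ℝ => Int.fract (∑ j : Fin d, if t j then -(u j) else u j)) μ
      = volume.restrict (Set.Icc (0:ℝ) 1) :=
  stmt_4_general d s f hf μ hμ t ht1 ht2
end

section
/- The set { 6 ∫₀¹ x(1−x) f(x) dx − 1 : f a generator } equals the open interval (−1, 1/2). Consequently, for a fixed signature s ∈ {0,1}², the range of Spearman's rho over the copulas with densities c_f^s, f a generator, is (−1, 1/2) when s₁ = s₂ and (−1/2, 1) when s₁ ≠ s₂. -/
open MeasureTheory

/-!
With `m f = ∫₀¹ x (1 - x) f x`, Spearman's rho is `±(6 m f - 1)`. Since `0 < x (1 - x)` and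
`1/4 - x (1 - x) = (x - 1/2)²` is positive off a null set, every probability density has
`0 < m f < 1/4`. Conversely the uniform densities on `[0, t]` and on `[1/2 - t, 1/2 + t]` have
moments `t/2 - t²/3` and `1/4 - t²/3`, which together sweep out all of `(0, 1/4)`.
-/

open Set

theorem integral_mul_pos_of_ae_pos {α : Type*} [MeasurableSpace α] {μ : Measure α}
    {f g : α → ℝ} (hg : ∀ᵐ x ∂μ, 0 < g x) (hf : 0 ≤ᵐ[μ] f)
    (hgf : Integrable (fun x => g x * f x) μ) (hf_pos : 0 < ∫ x, f x ∂μ) :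
    0 < ∫ x, g x * f x ∂μ := by
  have hgf_nonneg : 0 ≤ᵐ[μ] fun x => g x * f x := by
    filter_upwards [hg, hf] with x hgx hfx
    exact mul_nonneg hgx.le hfx
  refine (integral_nonneg_of_ae hgf_nonneg).lt_of_ne fun h => hf_pos.ne' ?_
  have hf_zero : f =ᵐ[μ] 0 := by
    filter_upwards [hg, (integral_eq_zero_iff_of_nonneg_ae hgf_nonneg hgf).1 h.symm]
      with x hgx hx
    exact (mul_eq_zero.1 hx).resolve_left hgx.ne'
  simp [integral_congr_ae hf_zero]

namespace IsGenerator

variable {f : ℝ → ℝ}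

theorem integrableOn (hf : IsGenerator f) : IntegrableOn f (Icc 0 1) :=
  Integrable.of_integral_ne_zero (by rw [hf.2.2]; exact one_ne_zero)

theorem integrableOn_mul (hf : IsGenerator f) {g : ℝ → ℝ} (hg : ContinuousOn g (Icc 0 1)) :
    IntegrableOn (fun x => g x * f x) (Icc 0 1) :=
  hf.integrableOn.continuousOn_mul hg isCompact_Icc

theorem setIntegral_mul_pos (hf : IsGenerator f) {g : ℝ → ℝ} (hg : ContinuousOn g (Icc 0 1))
    (hg_pos : ∀ᵐ x ∂volume.restrict (Icc 0 1), 0 < g x) :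
    0 < ∫ x in Icc 0 1, g x * f x :=
  integral_mul_pos_of_ae_pos hg_pos ((ae_restrict_iff' measurableSet_Icc).2 (.of_forall hf.2.1))
    (hf.integrableOn_mul hg) (by rw [hf.2.2]; exact one_pos)

theorem moment_mem_Ioo (hf : IsGenerator f) :
    ∫ x in Icc (0:ℝ) 1, x * (1 - x) * f x ∈ Ioo 0 (1/4) := by
  have hne (c : ℝ) : ∀ᵐ x ∂volume.restrict (Icc (0:ℝ) 1), x ≠ c :=
    ae_restrict_of_ae (Measure.ae_ne volume c)
  constructor
  · refine hf.setIntegral_mul_pos (by fun_prop) ?_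
    filter_upwards [ae_restrict_mem measurableSet_Icc, hne 0, hne 1] with x hx hx0 hx1
    exact mul_pos (lt_of_le_of_ne hx.1 hx0.symm) (sub_pos.2 (lt_of_le_of_ne hx.2 hx1))
  · have hpos := hf.setIntegral_mul_pos (g := fun x => (x - 1/2)^2) (by fun_prop) <| by
      filter_upwards [hne (1/2)] with x hx
      exact pow_two_pos_of_ne_zero (sub_ne_zero.2 hx)
    have hsplit : ∫ x in Icc (0:ℝ) 1, (x - 1/2)^2 * f x
        = 1/4 * (∫ x in Icc (0:ℝ) 1, f x) - ∫ x in Icc (0:ℝ) 1, x * (1 - x) * f x := by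
      rw [← integral_const_mul, ← integral_sub (hf.integrableOn.const_mul _)
        (hf.integrableOn_mul (g := fun x => x * (1 - x)) (by fun_prop))]
      congr 1 with x
      ring
    rw [hsplit, hf.2.2] at hpos
    linarith

end IsGenerator

noncomputable def uniformDensity (a b : ℝ) : ℝ → ℝ :=
  (Icc a b).indicator fun _ => (b - a)⁻¹

section uniformDensity

variable {a b : ℝ}

theorem setIntegral_mul_uniformDensity (ha : 0 ≤ a) (hab : a ≤ b) (hb : b ≤ 1) (g : ℝ → ℝ) :
    ∫ x in Icc (0:ℝ) 1, g x * uniformDensity a b x = (b - a)⁻¹ * ∫ x in a..b, g x := by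
  simp_rw [uniformDensity, ← indicator_mul_right]
  rw [setIntegral_indicator measurableSet_Icc, inter_eq_right.2 (Icc_subset_Icc ha hb),
    integral_mul_const, integral_Icc_eq_integral_Ioc, ← intervalIntegral.integral_of_le hab,
    mul_comm]

theorem isGenerator_uniformDensity (ha : 0 ≤ a) (hab : a < b) (hb : b ≤ 1) :
    IsGenerator (uniformDensity a b) := by
  refine ⟨measurable_const.indicator measurableSet_Icc,
    fun x _ => indicator_nonneg (fun _ _ => inv_nonneg.2 (sub_nonneg.2 hab.le)) x, ?_⟩
  simpa [inv_mul_cancel₀ (sub_ne_zero.2 hab.ne')]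
    using setIntegral_mul_uniformDensity ha hab.le hb fun _ => 1

theorem moment_uniformDensity (ha : 0 ≤ a) (hab : a < b) (hb : b ≤ 1) :
    ∫ x in Icc (0:ℝ) 1, x * (1 - x) * uniformDensity a b x
      = (a + b) / 2 - (a ^ 2 + a * b + b ^ 2) / 3 := by
  have hpoly : ∫ x in a..b, x * (1 - x) = (b ^ 2 - a ^ 2) / 2 - (b ^ 3 - a ^ 3) / 3 := by
    simp_rw [mul_one_sub, ← sq]
    rw [intervalIntegral.integral_sub intervalIntegral.intervalIntegrable_id
      (intervalIntegral.intervalIntegrable_pow 2), integral_id, integral_pow]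
    norm_num
  rw [setIntegral_mul_uniformDensity ha hab.le hb fun x => x * (1 - x), hpoly]
  field_simp [sub_ne_zero.2 hab.ne']
  ring

end uniformDensity

theorem exists_isGenerator_moment_eq {m : ℝ} (hm : m ∈ Ioo 0 (1/4)) :
    ∃ f, IsGenerator f ∧ ∫ x in Icc (0:ℝ) 1, x * (1 - x) * f x = m := by
  obtain ⟨hm0, hm1⟩ := hm
  rcases le_or_gt m (1/6) with hm6 | hm6
  · -- the uniform density on `[0, t]` has moment `t/2 - t^2/3`
    set s := √(9 - 48 * m)
    have hs : s ^ 2 = 9 - 48 * m := Real.sq_sqrt (by linarith)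
    have hs1 : 1 ≤ s := Real.one_le_sqrt.2 (by linarith)
    have hs3 : s < 3 := by nlinarith [Real.sqrt_nonneg (9 - 48 * m)]
    refine ⟨uniformDensity 0 ((3 - s) / 4), isGenerator_uniformDensity le_rfl (by linarith)
      (by linarith), ?_⟩
    rw [moment_uniformDensity le_rfl (by linarith) (by linarith)]
    linear_combination -hs / 48
  · -- the uniform density on `[1/2 - t, 1/2 + t]` has moment `1/4 - t^2/3`
    set t := √(3 / 4 - 3 * m)
    have ht : t ^ 2 = 3 / 4 - 3 * m := Real.sq_sqrt (by linarith)
    have ht0 : 0 < t := Real.sqrt_pos.2 (by linarith)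
    have ht1 : t < 1/2 := by nlinarith
    refine ⟨uniformDensity (1/2 - t) (1/2 + t), isGenerator_uniformDensity (by linarith)
      (by linarith) (by linarith), ?_⟩
    rw [moment_uniformDensity (by linarith) (by linarith) (by linarith)]
    linear_combination -ht / 3

theorem setOf_moment_eq_Ioo :
    {r : ℝ | ∃ f : ℝ → ℝ, IsGenerator f ∧
        r = 6 * (∫ x in Icc (0:ℝ) 1, x * (1 - x) * f x) - 1} = Ioo (-1) (1/2) := by
  ext r
  constructor
  · rintro ⟨f, hf, rfl⟩
    obtain ⟨h0, h1⟩ := hf.moment_mem_Ioo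
    constructor <;> linarith
  · rintro ⟨h0, h1⟩
    obtain ⟨f, hf, hfm⟩ := exists_isGenerator_moment_eq (m := (r + 1) / 6)
      ⟨by linarith, by linarith⟩
    exact ⟨f, hf, by rw [hfm]; ring⟩

theorem setOf_one_sub_moment_eq_Ioo :
    {r : ℝ | ∃ f : ℝ → ℝ, IsGenerator f ∧
        r = 1 - 6 * ∫ x in Icc (0:ℝ) 1, x * (1 - x) * f x} = Ioo (-(1/2)) 1 := by
  have hneg : {r : ℝ | ∃ f : ℝ → ℝ, IsGenerator f ∧
      r = 1 - 6 * ∫ x in Icc (0:ℝ) 1, x * (1 - x) * f x}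
      = -{r : ℝ | ∃ f : ℝ → ℝ, IsGenerator f ∧
        r = 6 * (∫ x in Icc (0:ℝ) 1, x * (1 - x) * f x) - 1} := by
    ext r
    refine exists_congr fun f => and_congr_right fun _ => ?_
    constructor <;> intro h <;> linarith
  rw [hneg, setOf_moment_eq_Ioo, neg_Ioo]
  norm_num

theorem stmt_8 :
    ({r : ℝ | ∃ f : ℝ → ℝ, IsGenerator f ∧
        r = 6 * (∫ x in Set.Icc (0:ℝ) 1, x * (1 - x) * f x) - 1}
      = Set.Ioo (-1 : ℝ) (1/2))
    ∧ ∀ s : Fin 2 → Bool,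
      {r : ℝ | ∃ f : ℝ → ℝ, IsGenerator f ∧
          r = (-1 : ℝ) ^ (((if s 0 then 1 else 0) + (if s 1 then 1 else 0) : ℕ)) *
              (6 * (∫ x in Set.Icc (0:ℝ) 1, x * (1 - x) * f x) - 1)}
        = if s 0 = s 1 then Set.Ioo (-1 : ℝ) (1/2) else Set.Ioo (-(1/2) : ℝ) 1 := by
  refine ⟨setOf_moment_eq_Ioo, fun s => ?_⟩
  cases s 0 <;> cases s 1 <;> norm_num [setOf_moment_eq_Ioo, setOf_one_sub_moment_eq_Ioo]
end

section
/- Let f be a generator with cdf F(x) := ∫₀ˣ f(t) dt, and define the iterated antiderivatives F^{(0)} := F and F^{(−m)}(x) := ∫₀ˣ F^{(−m+1)}(t) dt for m ≥ 1. Then for every m ∈ ℕ, F^{(−m)}(1) = Σ_{j=0}^m (−1)^j / (j! (m−j)!) · ∫₀¹ x^j f(x) dx; that is, F^{(−m)}(1) = Σ_{j=0}^m (−1)^j E[X^j] / (j!(m−j)!) where X has density f. -/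
/-!
Cauchy's formula for repeated integration: by induction, swapping the order of integration over
the triangle `a < t ≤ s ≤ b` at each step, the `m`-th iterated antiderivative of `f` is
`F^{(-m)}(x) = ∫₀ˣ (x - t)^m / m! f(t) dt`. At `x = 1`, expanding `(1 - t)^m` by the binomial
theorem turns this into the stated combination of moments.
-/

open MeasureTheory

open Set Function

theorem integral_integral_triangle_swap {a b : ℝ} (hab : a ≤ b) {K : ℝ → ℝ → ℝ}
    (hK : IntegrableOn (uncurry K) (Icc a b ×ˢ Icc a b)) :
    ∫ s in a..b, ∫ t in a..s, K s t = ∫ t in a..b, ∫ s in t..b, K s t := by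
  set μ := volume.restrict (Ioc a b)
  set H : ℝ → ℝ → ℝ := curry ({p : ℝ × ℝ | p.2 ≤ p.1}.indicator (uncurry K))
  have hH : Integrable (uncurry H) (μ.prod μ) := by
    rw [uncurry_curry, Measure.prod_restrict, ← Measure.volume_eq_prod]
    exact (hK.mono_set (prod_mono Ioc_subset_Icc_self Ioc_subset_Icc_self)).indicator
      (measurableSet_le measurable_snd measurable_fst)
  have inner_left : ∀ s ∈ Ioc a b, ∫ t, H s t ∂μ = ∫ t in a..s, K s t := by
    intro s hs
    have : H s = (Iic s).indicator (K s) := by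
      ext t; simp [H, indicator_apply]
    rw [this, MeasureTheory.integral_indicator measurableSet_Iic, Measure.restrict_restrict measurableSet_Iic,
      inter_comm, Ioc_inter_Iic, inf_eq_right.2 hs.2, intervalIntegral.integral_of_le hs.1.le]
  have inner_right : ∀ t ∈ Ioc a b, ∫ s, H s t ∂μ = ∫ s in t..b, K s t := by
    intro t ht
    have : (H · t) = (Ici t).indicator (K · t) := by
      ext s; simp [H, indicator_apply]
    have hset : Ici t ∩ Ioc a b = Icc t b := by
      ext s; simp only [mem_inter_iff, mem_Ici, mem_Ioc, mem_Icc]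
      exact ⟨fun h => ⟨h.1, h.2.2⟩, fun h => ⟨h.1, ht.1.trans_le h.1, h.2⟩⟩
    rw [this, MeasureTheory.integral_indicator measurableSet_Ici, Measure.restrict_restrict measurableSet_Ici,
      hset, integral_Icc_eq_integral_Ioc, intervalIntegral.integral_of_le ht.2]
  calc ∫ s in a..b, ∫ t in a..s, K s t = ∫ s, ∫ t, H s t ∂μ ∂μ := by
        rw [intervalIntegral.integral_of_le hab]
        exact setIntegral_congr_fun measurableSet_Ioc fun s hs => (inner_left s hs).symm
    _ = ∫ t, ∫ s, H s t ∂μ ∂μ := integral_integral_swap hH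
    _ = ∫ t in a..b, ∫ s in t..b, K s t := by
        rw [intervalIntegral.integral_of_le hab]
        exact setIntegral_congr_fun measurableSet_Ioc inner_right

theorem integral_sub_pow_div_factorial (m : ℕ) (t b : ℝ) :
    ∫ s in t..b, (s - t) ^ m / m.factorial = (b - t) ^ (m + 1) / (m + 1).factorial := by
  rw [intervalIntegral.integral_comp_sub_right (fun u => u ^ m / m.factorial),
    intervalIntegral.integral_div, integral_pow,
    sub_self, zero_pow m.succ_ne_zero, sub_zero, Nat.factorial_succ]
  push_cast
  field_simp

theorem integral_integral_sub_pow_mul {a b : ℝ} (hab : a ≤ b) {g : ℝ → ℝ}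
    (hg : IntegrableOn g (Icc a b)) (m : ℕ) :
    ∫ s in a..b, ∫ t in a..s, (s - t) ^ m / m.factorial * g t
      = ∫ t in a..b, (b - t) ^ (m + 1) / (m + 1).factorial * g t := by
  have hK : IntegrableOn (fun p : ℝ × ℝ => (p.1 - p.2) ^ m / m.factorial * g p.2)
      (Icc a b ×ˢ Icc a b) := by
    have hg₂ : IntegrableOn (fun p : ℝ × ℝ => g p.2) (Icc a b ×ˢ Icc a b) := by
      rw [IntegrableOn, Measure.volume_eq_prod, ← Measure.prod_restrict]
      exact hg.comp_snd _
    exact hg₂.continuousOn_mul (by fun_prop) (isCompact_Icc.prod isCompact_Icc)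
  rw [integral_integral_triangle_swap (K := fun s t => (s - t) ^ m / m.factorial * g t) hab hK]
  congr 1 with t
  rw [intervalIntegral.integral_mul_const, integral_sub_pow_div_factorial]

theorem iterated_integral_eq_integral_sub_pow_mul {a b : ℝ} {g : ℝ → ℝ}
    (hg : IntegrableOn g (Icc a b)) {F : ℕ → ℝ → ℝ}
    (hF0 : ∀ x, F 0 x = ∫ t in a..x, g t)
    (hFsucc : ∀ m x, F (m + 1) x = ∫ t in a..x, F m t) (m : ℕ) :
    ∀ x ∈ Icc a b, F m x = ∫ t in a..x, (x - t) ^ m / m.factorial * g t := by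
  induction m with
  | zero => intro x _; simp [hF0]
  | succ m ih =>
    intro x hx
    rw [hFsucc, ← integral_integral_sub_pow_mul hx.1 (hg.mono_set (Icc_subset_Icc_right hx.2))]
    refine intervalIntegral.integral_congr fun s hs => ih s ?_
    rw [uIcc_of_le hx.1] at hs
    exact ⟨hs.1, hs.2.trans hx.2⟩

theorem one_sub_pow_div_factorial (m : ℕ) (t : ℝ) :
    (1 - t) ^ m / m.factorial = ∑ j ∈ Finset.range (m + 1),
      (-1 : ℝ) ^ j / ((j.factorial : ℝ) * ((m - j).factorial : ℝ)) * t ^ j := by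
  rw [sub_eq_neg_add, add_pow, Finset.sum_div]
  refine Finset.sum_congr rfl fun j hj => ?_
  have hjm : j ≤ m := Nat.lt_succ_iff.mp (Finset.mem_range.mp hj)
  rw [Nat.cast_choose ℝ hjm, one_pow, neg_pow]
  field_simp

theorem stmt_10 (f : ℝ → ℝ) (hf : IsGenerator f)
    (F : ℕ → ℝ → ℝ)
    (hF0 : ∀ x, F 0 x = ∫ t in (0:ℝ)..x, f t)
    (hFsucc : ∀ (m : ℕ) (x : ℝ), F (m + 1) x = ∫ t in (0:ℝ)..x, F m t) :
    ∀ m : ℕ, F m 1 = ∑ j ∈ Finset.range (m + 1),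
      (-1 : ℝ) ^ j / ((Nat.factorial j : ℝ) * (Nat.factorial (m - j) : ℝ)) *
        ∫ x in Set.Icc (0:ℝ) 1, x ^ j * f x := by
  intro m
  -- The Bochner integral of a non-integrable function is `0`, so `∫ f = 1` forces integrability.
  have hf_int : IntegrableOn f (Icc 0 1) :=
    .of_integral_ne_zero (by rw [hf.2.2]; exact one_ne_zero)
  have hpow_int : ∀ j : ℕ, IntegrableOn (fun x => x ^ j * f x) (Icc 0 1) := fun j =>
    hf_int.continuousOn_mul (by fun_prop) isCompact_Icc
  rw [iterated_integral_eq_integral_sub_pow_mul hf_int hF0 hFsucc m 1 ⟨zero_le_one, le_rfl⟩,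
    intervalIntegral.integral_of_le zero_le_one, ← integral_Icc_eq_integral_Ioc]
  simp_rw [one_sub_pow_div_factorial, Finset.sum_mul, mul_assoc]
  rw [integral_finsetSum _ fun j _ => (hpow_int j).const_mul _]
  simp_rw [MeasureTheory.integral_const_mul]
end

section
/- Let f be a generator with cdf F(x) := ∫₀ˣ f(t) dt, and let X, X' be independent random variables each with density f. Define w : [0,1]² → ℝ by w(u₁,u₂) := F(frac(u₁+u₂)) + 1{u₁+u₂ > 1}. Then ∫_{[0,1]²} (w(u) − F(u₁))² du = 2 Var(X) − E|X − X'| + 1/2. Consequently, the Dette–Siburg–Stoimenov coefficient ξ := 6 ∫_{[0,1]²} (∂₁C_f(u))² du − 2 of the bivariate copula C_f with density c_f(u) = f(frac(u₁+u₂)) — whose first partial derivative satisfies ∂₁C_f(u) = w(u) − F(u₁) — equals 12 Var(X) − 6 E|X − X'| + 1. -/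
/-!
Rotating the second coordinate by the first, `t = frac(u₁ + u₂)` is uniform on `[0,1]` for each
fixed `x = u₁`, and the carry `1{u₁ + u₂ > 1}` becomes `1{t ≤ x}` almost everywhere. The left side
is therefore `∫∫ (F t - F x + 1{t ≤ x})² dt dx`, which expands into `∫ F`, `∫ F²` and `∫ t F t`.
Integration by parts against the absolutely continuous cdf `F` expresses the moments and the
mean absolute difference through the same three integrals:
`E X = 1 - ∫ F`, `E X² = 1 - 2 ∫ t F t` and `E|X - X'| = 2 ∫ F (1 - F)`.
-/

open MeasureTheory

open Set

theorem AbsolutelyContinuousOnInterval.integral_mul_eq_sub_integral_mul {F G f g : ℝ → ℝ}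
    {a b : ℝ} (hF : AbsolutelyContinuousOnInterval F a b)
    (hG : AbsolutelyContinuousOnInterval G a b)
    (hFf : ∀ᵐ x, x ∈ uIcc a b → HasDerivAt F (f x) x)
    (hGg : ∀ᵐ x, x ∈ uIcc a b → HasDerivAt G (g x) x) :
    ∫ x in a..b, f x * G x = F b * G b - F a * G a - ∫ x in a..b, F x * g x := by
  have hparts := hG.integral_mul_deriv_eq_deriv_mul hF
  have hf : ∫ x in a..b, f x * G x = ∫ x in a..b, G x * deriv F x := by
    refine intervalIntegral.integral_congr_ae ?_
    filter_upwards [hFf] with x hx hxab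
    rw [(hx (uIoc_subset_uIcc hxab)).deriv, mul_comm]
  have hg : ∫ x in a..b, deriv G x * F x = ∫ x in a..b, F x * g x := by
    refine intervalIntegral.integral_congr_ae ?_
    filter_upwards [hGg] with x hx hxab
    rw [(hx (uIoc_subset_uIcc hxab)).deriv, mul_comm]
  rw [hf, hparts, hg]
  ring

theorem IntervalIntegrable.absolutelyContinuousOnInterval_of_primitive {f F : ℝ → ℝ} {a b : ℝ}
    (hf : IntervalIntegrable f volume a b) (hF : ∀ x, F x = ∫ t in a..x, f t) :
    AbsolutelyContinuousOnInterval F a b := by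
  rw [funext hF]
  exact hf.absolutelyContinuousOnInterval_intervalIntegral left_mem_uIcc

theorem IntervalIntegrable.ae_hasDerivAt_of_primitive {f F : ℝ → ℝ} {a b : ℝ}
    (hf : IntervalIntegrable f volume a b) (hF : ∀ x, F x = ∫ t in a..x, f t) :
    ∀ᵐ x, x ∈ uIcc a b → HasDerivAt F (f x) x := by
  rw [funext hF]
  filter_upwards [hf.ae_hasDerivAt_integral] with x hx hxab
  exact hx hxab a left_mem_uIcc

theorem ContDiff.absolutelyContinuousOnInterval {g : ℝ → ℝ} (hg : ContDiff ℝ 1 g) (a b : ℝ) :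
    AbsolutelyContinuousOnInterval g a b :=
  hg.contDiffOn.absolutelyContinuousOnInterval

theorem integral_primitive_eq_integral_sub_mul {G : ℝ → ℝ} {a b : ℝ}
    (hG : IntervalIntegrable G volume a b) :
    ∫ x in a..b, ∫ t in a..x, G t = ∫ t in a..b, (b - t) * G t := by
  have h := (ContDiff.absolutelyContinuousOnInterval (g := fun x => x - b) (by fun_prop) a b
    ).integral_mul_eq_sub_integral_mul (f := fun _ => 1)
    (hG.absolutelyContinuousOnInterval_of_primitive fun _ => rfl)
    (Filter.Eventually.of_forall fun x _ => (hasDerivAt_id x).sub_const b)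
    (hG.ae_hasDerivAt_of_primitive fun _ => rfl)
  simp only [one_mul, sub_self, zero_mul, intervalIntegral.integral_same, mul_zero, zero_sub] at h
  rw [h, ← intervalIntegral.integral_neg]
  congr 1; ext t; ring

theorem setIntegral_univ_pi_fin_two {α : Type*} [MeasureSpace α] [SigmaFinite (volume : Measure α)]
    (s : Set α) (H : α → α → ℝ) :
    ∫ u in univ.pi (fun _ : Fin 2 => s), H (u 0) (u 1) = ∫ p in s ×ˢ s, H p.1 p.2 := by
  have hpre : univ.pi (fun _ : Fin 2 => s) = MeasurableEquiv.finTwoArrow ⁻¹' (s ×ˢ s) := by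
    ext u
    simp [Fin.forall_fin_two]
  rw [hpre]
  exact (volume_preserving_finTwoArrow α).setIntegral_preimage_emb
    (MeasurableEquiv.measurableEmbedding _) (fun p => H p.1 p.2) (s ×ˢ s)

theorem integral_Icc_eq_intervalIntegral {a b : ℝ} (hab : a ≤ b) (g : ℝ → ℝ) :
    ∫ x in Icc a b, g x = ∫ x in a..b, g x := by
  rw [integral_Icc_eq_integral_Ioc, intervalIntegral.integral_of_le hab]

theorem setIntegral_univ_pi_Icc_eq_integral_integral {a b : ℝ} (hab : a ≤ b) {H : ℝ → ℝ → ℝ}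
    (hH : IntegrableOn (fun p : ℝ × ℝ => H p.1 p.2) (Icc a b ×ˢ Icc a b)) :
    ∫ u in univ.pi (fun _ : Fin 2 => Icc a b), H (u 0) (u 1)
      = ∫ x in a..b, ∫ y in a..b, H x y := by
  rw [setIntegral_univ_pi_fin_two, Measure.volume_eq_prod, setIntegral_prod _ hH,
    integral_Icc_eq_intervalIntegral hab]
  simp_rw [integral_Icc_eq_intervalIntegral hab]

theorem intervalIntegral_comp_fract_add (φ : ℝ → ℝ) (c : ℝ) :
    ∫ y in (0:ℝ)..1, φ (Int.fract (c + y)) = ∫ y in (0:ℝ)..1, φ y := by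
  have hper : Function.Periodic (fun y => φ (Int.fract y)) 1 := fun y => by
    simp only [Int.fract_add_one]
  rw [intervalIntegral.integral_comp_add_left (fun y => φ (Int.fract y)), add_zero,
    hper.intervalIntegral_add_eq c 0, zero_add, intervalIntegral.integral_of_le zero_le_one,
    intervalIntegral.integral_of_le zero_le_one, ← integral_Ico_eq_integral_Ioc,
    ← integral_Ico_eq_integral_Ioc]
  exact setIntegral_congr_fun measurableSet_Ico fun y hy => by
    rw [Int.fract_eq_self.2 hy]

theorem one_lt_add_iff_fract_add_le {x y : ℝ} (hx : x ∈ Icc (0:ℝ) 1) (hy : y ∈ Ioc (0:ℝ) 1)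
    (hxy : x + y ≠ 1) : 1 < x + y ↔ Int.fract (x + y) ≤ x := by
  rcases hxy.lt_or_gt with hlt | hgt
  · rw [Int.fract_eq_self.2 ⟨by linarith [hx.1, hy.1], hlt⟩]
    constructor <;> intro h <;> linarith [hy.1]
  · have hfloor : (1:ℤ) ≤ ⌊x + y⌋ := Int.le_floor.2 (by exact_mod_cast hgt.le)
    have : Int.fract (x + y) ≤ x + y - 1 := by
      rw [Int.fract]; linarith [show (1:ℝ) ≤ ⌊x + y⌋ by exact_mod_cast hfloor]
    exact ⟨fun _ => by linarith [hy.2], fun _ => hgt⟩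

theorem intervalIntegral_fract_add_carry (ψ : ℝ → ℝ → ℝ) {x : ℝ} (hx : x ∈ Icc (0:ℝ) 1) :
    ∫ y in (0:ℝ)..1, ψ (Int.fract (x + y)) (if 1 < x + y then 1 else 0)
      = ∫ t in (0:ℝ)..1, ψ t (if t ≤ x then 1 else 0) := by
  rw [← intervalIntegral_comp_fract_add (fun t => ψ t (if t ≤ x then 1 else 0)) x]
  refine intervalIntegral.integral_congr_ae ?_
  filter_upwards [Measure.ae_ne volume (1 - x)] with y hy hy01
  rw [uIoc_of_le zero_le_one] at hy01
  simp only [one_lt_add_iff_fract_add_le hx hy01 fun h => hy (by linarith)]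

theorem integral_sq_add_indicator_sub {F : ℝ → ℝ} (hF : ContinuousOn F (Icc (0:ℝ) 1)) {x : ℝ}
    (hx : x ∈ Icc (0:ℝ) 1) :
    ∫ t in (0:ℝ)..1, (F t + (if t ≤ x then 1 else 0) - F x) ^ 2
      = (∫ t in (0:ℝ)..1, F t ^ 2) - 2 * F x * (∫ t in (0:ℝ)..1, F t) + F x ^ 2
        + x + 2 * (∫ t in (0:ℝ)..x, F t) - 2 * x * F x := by
  have hF1 : ContinuousOn F (uIcc 0 1) := by rwa [uIcc_of_le zero_le_one]
  have hFx : ContinuousOn F (uIcc 0 x) := hF1.mono (uIcc_subset_uIcc_left (by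
    rwa [uIcc_of_le zero_le_one]))
  have hsplit : ∀ t, (F t + (if t ≤ x then 1 else 0) - F x) ^ 2
      = (F t - F x) ^ 2 + {t | t ≤ x}.indicator (fun t => 1 + 2 * (F t - F x)) t := fun t => by
    by_cases ht : t ≤ x
    · simp [ht]; ring
    · simp [ht]
  simp_rw [hsplit]
  rw [intervalIntegral.integral_add, intervalIntegral.integral_indicator hx]
  · simp (disch := exact ContinuousOn.intervalIntegrable (by fun_prop)) only
      [sub_sq, intervalIntegral.integral_add, intervalIntegral.integral_sub,
       intervalIntegral.integral_const_mul, intervalIntegral.integral_mul_const,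
       intervalIntegral.integral_const, smul_eq_mul]
    ring
  · exact ContinuousOn.intervalIntegrable (by fun_prop)
  · have h : IntervalIntegrable (fun t => 1 + 2 * (F t - F x)) volume 0 1 :=
      ContinuousOn.intervalIntegrable (by fun_prop)
    rw [intervalIntegrable_iff] at h ⊢
    exact h.indicator measurableSet_Iic

theorem integral_integral_sq_fract_add {F : ℝ → ℝ} (hF : ContinuousOn F (Icc (0:ℝ) 1)) :
    ∫ x in (0:ℝ)..1, ∫ y in (0:ℝ)..1,
        (F (Int.fract (x + y)) + (if 1 < x + y then 1 else 0) - F x) ^ 2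
      = 2 * (∫ t in (0:ℝ)..1, F t ^ 2) - 2 * (∫ t in (0:ℝ)..1, F t) ^ 2 + 1 / 2
        + 2 * (∫ t in (0:ℝ)..1, F t) - 4 * ∫ t in (0:ℝ)..1, t * F t := by
  have hF1 : ContinuousOn F (uIcc 0 1) := by rwa [uIcc_of_le zero_le_one]
  have hFi : IntervalIntegrable F volume 0 1 := hF1.intervalIntegrable
  have hΦ : ContinuousOn (fun x => ∫ t in (0:ℝ)..x, F t) (uIcc 0 1) :=
    (hFi.absolutelyContinuousOnInterval_of_primitive fun _ => rfl).continuousOn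
  have hinner : ∀ x ∈ uIcc (0:ℝ) 1, ∫ y in (0:ℝ)..1,
        (F (Int.fract (x + y)) + (if 1 < x + y then 1 else 0) - F x) ^ 2
      = (∫ t in (0:ℝ)..1, F t ^ 2) - 2 * F x * (∫ t in (0:ℝ)..1, F t) + F x ^ 2
        + x + 2 * (∫ t in (0:ℝ)..x, F t) - 2 * x * F x := fun x hx => by
    rw [uIcc_of_le zero_le_one] at hx
    rw [intervalIntegral_fract_add_carry (fun t e => (F t + e - F x) ^ 2) hx,
      integral_sq_add_indicator_sub hF hx]
  rw [intervalIntegral.integral_congr hinner]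
  simp (disch := exact ContinuousOn.intervalIntegrable (by fun_prop)) only
    [intervalIntegral.integral_add, intervalIntegral.integral_sub,
     intervalIntegral.integral_const_mul, intervalIntegral.integral_mul_const,
     intervalIntegral.integral_const, smul_eq_mul, integral_id,
     integral_primitive_eq_integral_sub_mul hFi, sub_mul, one_mul, mul_assoc]
  ring

theorem integrableOn_sq_fract_add {F : ℝ → ℝ} (hF : ContinuousOn F (Icc (0:ℝ) 1)) :
    IntegrableOn (fun p : ℝ × ℝ =>
        (F (Int.fract (p.1 + p.2)) + (if 1 < p.1 + p.2 then 1 else 0) - F p.1) ^ 2)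
      (Icc 0 1 ×ˢ Icc 0 1) := by
  set Fe : ℝ → ℝ := fun s => F (projIcc 0 1 zero_le_one s)
  have hFe : Continuous Fe :=
    hF.comp_continuous (continuous_subtype_val.comp continuous_projIcc) fun s => (projIcc _ _ _ s).2
  have hFeq : ∀ s ∈ Icc (0:ℝ) 1, F s = Fe s := fun s hs => by simp [Fe, projIcc_of_mem _ hs]
  have hfract : ∀ s : ℝ, Int.fract s ∈ Icc (0:ℝ) 1 :=
    fun s => ⟨Int.fract_nonneg s, (Int.fract_lt_one s).le⟩
  obtain ⟨C, hC⟩ := isCompact_Icc.exists_bound_of_continuousOn hF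
  have hFeC : ∀ s, |Fe s| ≤ C := fun s => hC _ (projIcc _ _ _ s).2
  refine IntegrableOn.congr_fun (f := fun p : ℝ × ℝ =>
      (Fe (Int.fract (p.1 + p.2)) + (if 1 < p.1 + p.2 then 1 else 0) - Fe p.1) ^ 2) ?_
    (fun p hp => by simp only [hFeq _ (hfract _), hFeq _ hp.1])
    (measurableSet_Icc.prod measurableSet_Icc)
  have hmeas : Measurable fun p : ℝ × ℝ =>
      (Fe (Int.fract (p.1 + p.2)) + (if 1 < p.1 + p.2 then 1 else 0) - Fe p.1) ^ 2 := by
    have hsum : Measurable fun p : ℝ × ℝ => p.1 + p.2 := measurable_fst.add measurable_snd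
    have hcarry : Measurable fun p : ℝ × ℝ => (if 1 < p.1 + p.2 then 1 else 0 : ℝ) :=
      Measurable.ite (measurableSet_lt measurable_const hsum) measurable_const measurable_const
    exact (((hFe.measurable.comp (measurable_fract.comp hsum)).add hcarry).sub
      (hFe.measurable.comp measurable_fst)).pow_const 2
  refine Measure.integrableOn_of_bounded (M := (2 * C + 1) ^ 2)
    (isCompact_Icc.prod isCompact_Icc).measure_lt_top.ne hmeas.aestronglyMeasurable
    (Filter.Eventually.of_forall fun p => ?_)
  have hcarry_abs : |(if 1 < p.1 + p.2 then 1 else 0 : ℝ)| ≤ 1 := by split_ifs <;> simp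
  rw [Real.norm_eq_abs, abs_pow]
  gcongr
  calc _ ≤ |Fe (Int.fract (p.1 + p.2))| + |(if 1 < p.1 + p.2 then 1 else 0 : ℝ)| + |Fe p.1| :=
        (abs_sub _ _).trans (by gcongr; exact abs_add_le _ _)
    _ ≤ 2 * C + 1 := by linarith [hFeC (Int.fract (p.1 + p.2)), hFeC p.1]

section Primitive

variable {f F : ℝ → ℝ} (hf : IntervalIntegrable f volume 0 1)
  (hF : ∀ x, F x = ∫ t in (0:ℝ)..x, f t)
include hf hF

theorem integral_mul_eq_primitive_mul_sub {G g : ℝ → ℝ} {a b : ℝ}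
    (ha : a ∈ Icc (0:ℝ) 1) (hb : b ∈ Icc (0:ℝ) 1) (hG : ContDiff ℝ 1 G)
    (hGg : ∀ x, HasDerivAt G (g x) x) :
    ∫ x in a..b, f x * G x = F b * G b - F a * G a - ∫ x in a..b, F x * g x := by
  have hsub : uIcc a b ⊆ uIcc 0 1 := by
    rw [uIcc_of_le zero_le_one]; exact uIcc_subset_Icc ha hb
  refine ((hf.absolutelyContinuousOnInterval_of_primitive hF).mono hsub
    ).integral_mul_eq_sub_integral_mul (hG.absolutelyContinuousOnInterval a b) ?_
    (Filter.Eventually.of_forall fun x _ => hGg x)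
  filter_upwards [hf.ae_hasDerivAt_of_primitive hF] with x hx hxab using hx (hsub hxab)

theorem integral_id_mul_eq : ∫ x in (0:ℝ)..1, x * f x = F 1 - ∫ x in (0:ℝ)..1, F x := by
  have h := integral_mul_eq_primitive_mul_sub hf hF (left_mem_Icc.2 zero_le_one)
    (right_mem_Icc.2 zero_le_one) contDiff_id (fun x => hasDerivAt_id x)
  simp only [id, mul_one, mul_zero, sub_zero] at h
  simp_rw [mul_comm _ (f _)]
  exact h

theorem integral_sq_mul_eq :
    ∫ x in (0:ℝ)..1, x ^ 2 * f x = F 1 - 2 * ∫ x in (0:ℝ)..1, x * F x := by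
  have h := integral_mul_eq_primitive_mul_sub hf hF (left_mem_Icc.2 zero_le_one)
    (right_mem_Icc.2 zero_le_one) (G := fun x => x ^ 2) (by fun_prop)
    (fun x => by simpa using hasDerivAt_pow 2 x)
  simp_rw [mul_comm _ (f _), h]
  norm_num
  rw [← intervalIntegral.integral_const_mul]
  congr 1; ext x; ring

theorem continuousOn_primitive : ContinuousOn F (Icc 0 1) := by
  simpa [uIcc_of_le zero_le_one] using
    (hf.absolutelyContinuousOnInterval_of_primitive hF).continuousOn

theorem integral_abs_sub_mul_eq {x : ℝ} (hx : x ∈ Icc (0:ℝ) 1) :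
    ∫ y in (0:ℝ)..1, |x - y| * f y
      = 2 * (∫ t in (0:ℝ)..x, F t) + F 1 * (1 - x) - ∫ t in (0:ℝ)..1, F t := by
  have hF0 : F 0 = 0 := by rw [hF, intervalIntegral.integral_same]
  have hFi : IntervalIntegrable F volume 0 1 :=
    (continuousOn_primitive hf hF).intervalIntegrable_of_Icc zero_le_one
  have hint : ∀ c d, c ∈ Icc (0:ℝ) 1 → d ∈ Icc (0:ℝ) 1 →
      IntervalIntegrable (fun y => |x - y| * f y) volume c d := fun c d hc hd =>
    (hf.mono_set (by rw [uIcc_of_le zero_le_one]; exact uIcc_subset_Icc hc hd)).continuousOn_mul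
      (by fun_prop)
  have h0 : (0:ℝ) ∈ Icc (0:ℝ) 1 := left_mem_Icc.2 zero_le_one
  have h1 : (1:ℝ) ∈ Icc (0:ℝ) 1 := right_mem_Icc.2 zero_le_one
  have hleft : ∫ y in (0:ℝ)..x, |x - y| * f y = ∫ t in (0:ℝ)..x, F t := by
    rw [intervalIntegral.integral_congr (g := fun y => f y * (x - y)) fun y hy => by
      rw [uIcc_of_le hx.1] at hy
      simp only [abs_of_nonneg (sub_nonneg.2 hy.2), mul_comm],
      integral_mul_eq_primitive_mul_sub hf hF h0 hx (G := fun y => x - y) (by fun_prop)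
        (fun y => by simpa using (hasDerivAt_id y).const_sub x)]
    simp [hF0]
  have hright : ∫ y in x..1, |x - y| * f y = F 1 * (1 - x) - ∫ t in x..1, F t := by
    rw [intervalIntegral.integral_congr (g := fun y => f y * (y - x)) fun y hy => by
      rw [uIcc_of_le hx.2] at hy
      simp only [abs_sub_comm x, abs_of_nonneg (sub_nonneg.2 hy.1), mul_comm],
      integral_mul_eq_primitive_mul_sub hf hF hx h1 (G := fun y => y - x) (by fun_prop)
        (fun y => by simpa using (hasDerivAt_id y).sub_const x)]
    simp
  have htail : ∫ t in x..1, F t = (∫ t in (0:ℝ)..1, F t) - ∫ t in (0:ℝ)..x, F t :=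
    (intervalIntegral.integral_interval_sub_left (c := x) hFi
      (hFi.mono_set (by rw [uIcc_of_le zero_le_one]; exact uIcc_subset_Icc h0 hx))).symm
  rw [← intervalIntegral.integral_add_adjacent_intervals (hint 0 x h0 hx) (hint x 1 hx h1),
    hleft, hright, htail]
  ring

theorem integral_integral_abs_sub_mul_mul :
    ∫ x in (0:ℝ)..1, ∫ y in (0:ℝ)..1, |x - y| * (f x * f y)
      = 2 * F 1 * (∫ t in (0:ℝ)..1, F t) - 2 * ∫ t in (0:ℝ)..1, F t ^ 2 := by
  have hF0 : F 0 = 0 := by rw [hF, intervalIntegral.integral_same]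
  have hFc := continuousOn_primitive hf hF
  have hFi : IntervalIntegrable F volume 0 1 := hFc.intervalIntegrable_of_Icc zero_le_one
  set A := ∫ t in (0:ℝ)..1, F t
  set Φ : ℝ → ℝ := fun x => ∫ t in (0:ℝ)..x, F t
  have hinner : ∀ x ∈ uIcc (0:ℝ) 1, ∫ y in (0:ℝ)..1, |x - y| * (f x * f y)
      = f x * (2 * Φ x + (F 1 * (1 - x) - A)) := fun x hx => by
    rw [uIcc_of_le zero_le_one] at hx
    simp_rw [mul_left_comm _ (f x)]
    rw [intervalIntegral.integral_const_mul, integral_abs_sub_mul_eq hf hF hx, add_sub_assoc]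
  have hG : AbsolutelyContinuousOnInterval (fun x => 2 * Φ x + (F 1 * (1 - x) - A)) 0 1 :=
    ((hFi.absolutelyContinuousOnInterval_of_primitive fun _ => rfl).const_mul 2).add
      (ContDiff.absolutelyContinuousOnInterval (g := fun x => F 1 * (1 - x) - A) (by fun_prop) 0 1)
  have hGg : ∀ᵐ x, x ∈ uIcc (0:ℝ) 1 →
      HasDerivAt (fun x => 2 * Φ x + (F 1 * (1 - x) - A)) (2 * F x - F 1) x := by
    filter_upwards [hFi.ae_hasDerivAt_of_primitive (F := Φ) fun _ => rfl] with x hx hx01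
    exact (((hx hx01).const_mul 2).add ((((hasDerivAt_id x).const_sub 1).const_mul
      (F 1)).sub_const A)).congr_deriv (by ring)
  have hFF : ∫ x in (0:ℝ)..1, F x * (2 * F x - F 1)
      = 2 * (∫ t in (0:ℝ)..1, F t ^ 2) - F 1 * A := by
    simp_rw [mul_sub, mul_left_comm (F _) 2, ← sq, mul_comm (F _) (F 1)]
    rw [intervalIntegral.integral_sub, intervalIntegral.integral_const_mul,
      intervalIntegral.integral_const_mul]
    · exact ((hFc.pow 2).intervalIntegrable_of_Icc zero_le_one).const_mul 2
    · exact hFi.const_mul _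
  rw [intervalIntegral.integral_congr hinner,
    (hf.absolutelyContinuousOnInterval_of_primitive hF).integral_mul_eq_sub_integral_mul hG
      (hf.ae_hasDerivAt_of_primitive hF) hGg, hFF, hF0]
  simp only [Φ, A]
  ring

end Primitive

theorem integrableOn_abs_sub_mul_mul {f : ℝ → ℝ} (hf : IntegrableOn f (Icc (0:ℝ) 1)) :
    IntegrableOn (fun p : ℝ × ℝ => |p.1 - p.2| * (f p.1 * f p.2)) (Icc 0 1 ×ˢ Icc 0 1) := by
  have hff : IntegrableOn (fun p : ℝ × ℝ => f p.1 * f p.2) (Icc 0 1 ×ˢ Icc 0 1) := by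
    rw [IntegrableOn, Measure.volume_eq_prod, ← Measure.prod_restrict]
    exact hf.mul_prod hf
  refine hff.bdd_mul (c := 1)
    (by fun_prop : Continuous fun p : ℝ × ℝ => |p.1 - p.2|).aestronglyMeasurable ?_
  filter_upwards [ae_restrict_mem (measurableSet_Icc.prod measurableSet_Icc)] with p hp
  rw [Real.norm_eq_abs, abs_abs, abs_le]
  constructor <;> linarith [hp.1.1, hp.1.2, hp.2.1, hp.2.2]

theorem stmt_12 (f : ℝ → ℝ) (hf : IsGenerator f)
    (F : ℝ → ℝ) (hF : ∀ x, F x = ∫ t in (0:ℝ)..x, f t)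
    (w : ℝ → ℝ → ℝ)
    (hw : ∀ u₁ u₂ : ℝ, w u₁ u₂ = F (Int.fract (u₁ + u₂)) + (if 1 < u₁ + u₂ then 1 else 0)) :
    ((∫ u in Set.univ.pi (fun _ : Fin 2 => Set.Icc (0:ℝ) 1),
        (w (u 0) (u 1) - F (u 0)) ^ 2)
      = 2 * ((∫ x in Set.Icc (0:ℝ) 1, x ^ 2 * f x)
            - (∫ x in Set.Icc (0:ℝ) 1, x * f x) ^ 2)
        - (∫ u in Set.univ.pi (fun _ : Fin 2 => Set.Icc (0:ℝ) 1),
            |u 0 - u 1| * (f (u 0) * f (u 1)))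
        + 1 / 2)
    ∧ (6 * (∫ u in Set.univ.pi (fun _ : Fin 2 => Set.Icc (0:ℝ) 1),
          (w (u 0) (u 1) - F (u 0)) ^ 2) - 2
      = 12 * ((∫ x in Set.Icc (0:ℝ) 1, x ^ 2 * f x)
            - (∫ x in Set.Icc (0:ℝ) 1, x * f x) ^ 2)
        - 6 * (∫ u in Set.univ.pi (fun _ : Fin 2 => Set.Icc (0:ℝ) 1),
            |u 0 - u 1| * (f (u 0) * f (u 1)))
        + 1) := by
  obtain ⟨-, -, hf1⟩ := hf
  have hfi : IntegrableOn f (Icc 0 1) :=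
    Integrable.of_integral_ne_zero (by rw [hf1]; exact one_ne_zero)
  have hfi' : IntervalIntegrable f volume 0 1 :=
    (intervalIntegrable_iff_integrableOn_Icc_of_le zero_le_one).2 hfi
  have hF1 : F 1 = 1 := by rw [hF, ← integral_Icc_eq_intervalIntegral zero_le_one, hf1]
  have hFc := continuousOn_primitive hfi' hF
  have hlhs := integral_integral_sq_fract_add hFc
  rw [← setIntegral_univ_pi_Icc_eq_integral_integral zero_le_one (integrableOn_sq_fract_add hFc)]
    at hlhs
  have hD := integral_integral_abs_sub_mul_mul hfi' hF
  rw [← setIntegral_univ_pi_Icc_eq_integral_integral zero_le_one (integrableOn_abs_sub_mul_mul hfi)]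
    at hD
  simp_rw [hw, integral_Icc_eq_intervalIntegral zero_le_one, integral_sq_mul_eq hfi' hF,
    integral_id_mul_eq hfi' hF, hlhs, hD, hF1]
  constructor <;> ring
end

section
/- Let q ↦ w_q be a family of strictly positive weights indexed by the rationals in (0,1) with Σ_{q ∈ ℚ∩(0,1)} w_q = 1. For q ∈ ℚ∩(0,1), define f_q⁺(u) := 1/(2√(frac(u + q))) and f_q⁻(u) := 1/(2√(frac(−(u + q)))) for u ∈ [0,1] with u ≠ 1 − q, set f_q^±(1 − q) := 1/2, and let f_q := (f_q⁺ + f_q⁻)/2. Define h* : [0,1] → [0,∞] by h*(x) := Σ_{q ∈ ℚ∩(0,1)} w_q f_q(x). Then the set A := {x ∈ [0,1] : h*(x) = ∞} is uncountable. -/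
open MeasureTheory

theorem stmt_19 (w : ℚ → ℝ)
    (hw_pos : ∀ q : ℚ, q ∈ Set.Ioo (0:ℚ) 1 → 0 < w q)
    (hw_sum : ∑' q : {q : ℚ // q ∈ Set.Ioo (0:ℚ) 1}, w q.1 = 1)
    (fq : ℚ → ℝ → ℝ)
    (hfq : ∀ (q : ℚ) (u : ℝ), fq q u =
      ((if u = 1 - (q:ℝ) then 1/2 else 1 / (2 * Real.sqrt (Int.fract (u + (q:ℝ)))))
        + (if u = 1 - (q:ℝ) then 1/2 else 1 / (2 * Real.sqrt (Int.fract (-(u + (q:ℝ))))))) / 2)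
    (h : ℝ → ENNReal)
    (hh : ∀ x : ℝ, h x =
      ∑' q : {q : ℚ // q ∈ Set.Ioo (0:ℚ) 1}, ENNReal.ofReal (w q.1 * fq q.1 x)) :
    ¬ Set.Countable {x ∈ Set.Icc (0:ℝ) 1 | h x = ⊤} := by
  classical
  intro hc
  set S : Set ℝ := {x ∈ Set.Icc (0:ℝ) 1 | h x = ⊤} with hSdef
  -- the small thresholds
  set ε : ℚ → ℕ → ℝ := fun q n => min ((w q / (4*(n+1)))^2) (1/2) with hεdef
  have hεpos : ∀ (q : ℚ), q ∈ Set.Ioo (0:ℚ) 1 → ∀ n : ℕ, 0 < ε q n := by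
    intro q hq n
    have hw := hw_pos q hq
    have h1 : (0:ℝ) < (w q / (4*(n+1)))^2 := by positivity
    simp only [hεdef, lt_min_iff]
    exact ⟨h1, by norm_num⟩
  have hεle : ∀ (q : ℚ) (n : ℕ), ε q n ≤ 1/2 := fun q n => min_le_right _ _
  -- open sets
  set U : ℕ → Set ℝ := fun n =>
    ⋃ (q : {q : ℚ // q ∈ Set.Ioo (0:ℚ) 1}) (m : ℤ),
      Set.Ioo ((m:ℝ) - (q.1:ℝ)) ((m:ℝ) - (q.1:ℝ) + ε q.1 n) with hUdef
  have hUopen : ∀ n, IsOpen (U n) := by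
    intro n
    exact isOpen_iUnion fun q => isOpen_iUnion fun m => isOpen_Ioo
  -- density of U n
  have hUdense : ∀ n, Dense (U n) := by
    intro n
    rw [dense_iff_inter_open]
    intro V hV ⟨x, hxV⟩
    obtain ⟨δ, hδpos, hball⟩ := Metric.isOpen_iff.1 hV x hxV
    -- find a non-integer rational in (x, x + δ/2)
    obtain ⟨r₁, hr₁l, hr₁r⟩ := exists_rat_btwn (show x < x + δ/4 by linarith)
    have hfloor : ((⌊r₁⌋ : ℝ)) = (((⌊(r₁:ℝ)⌋ : ℤ) : ℝ)) := by
      rw [Rat.floor_cast]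
    have hub : (r₁:ℝ) < min (x + δ/2) ((⌊r₁⌋:ℝ) + 1) := by
      rw [lt_min_iff]
      constructor
      · linarith
      · rw [hfloor]; exact Int.lt_floor_add_one _
    obtain ⟨r, hrl, hrr⟩ := exists_rat_btwn hub
    have hr2 : (r:ℝ) < x + δ/2 := lt_of_lt_of_le hrr (min_le_left _ _)
    have hr3 : (r:ℝ) < (⌊r₁⌋:ℝ) + 1 := lt_of_lt_of_le hrr (min_le_right _ _)
    have hr4 : (⌊r₁⌋:ℝ) ≤ (r₁:ℝ) := by
      rw [hfloor]; exact Int.floor_le _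
    -- q := ⌊r₁⌋ + 1 - r ∈ (0,1)
    set q : ℚ := (⌊r₁⌋ : ℚ) + 1 - r with hqdef
    have hq01 : q ∈ Set.Ioo (0:ℚ) 1 := by
      constructor
      · have : (r:ℝ) < (⌊r₁⌋:ℝ) + 1 := hr3
        have : r < (⌊r₁⌋:ℚ) + 1 := by exact_mod_cast this
        simpa [hqdef] using by linarith
      · have h1 : (⌊r₁⌋:ℝ) < (r:ℝ) := lt_of_le_of_lt hr4 hrl
        have : (⌊r₁⌋:ℚ) < r := by exact_mod_cast h1
        simpa [hqdef] using by linarith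
    set m : ℤ := ⌊r₁⌋ + 1 with hmdef
    have hmq : (m:ℝ) - (q:ℝ) = (r:ℝ) := by
      simp only [hmdef, hqdef]
      push_cast
      ring
    -- the witness point
    set t : ℝ := min (ε q n) (δ/4) / 2 with htdef
    have hεp := hεpos q hq01 n
    have htpos : 0 < t := by
      simp only [htdef]
      have : 0 < min (ε q n) (δ/4) := lt_min hεp (by linarith)
      linarith
    have htlt : t < ε q n := by
      simp only [htdef]
      have h1 : min (ε q n) (δ/4) ≤ ε q n := min_le_left _ _
      linarith
    have htlt2 : t ≤ δ/8 := by
      simp only [htdef]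
      have h1 : min (ε q n) (δ/4) ≤ δ/4 := min_le_right _ _
      linarith
    refine ⟨(r:ℝ) + t, ?_, ?_⟩
    · apply hball
      rw [Metric.mem_ball, Real.dist_eq, abs_lt]
      have hxr : x < (r:ℝ) := lt_trans hr₁l (by exact_mod_cast hrl)
      constructor <;> [skip; skip] <;> nlinarith
    · rw [hUdef]
      refine Set.mem_iUnion.2 ⟨⟨q, hq01⟩, Set.mem_iUnion.2 ⟨m, ?_⟩⟩
      rw [Set.mem_Ioo, hmq]
      exact ⟨by linarith, by linarith⟩
  -- key estimate: membership in U n makes h x large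
  have hkey : ∀ (n : ℕ) (x : ℝ), x ∈ U n → (n : ENNReal) < h x := by
    intro n x hx
    rw [hUdef] at hx
    simp only [Set.mem_iUnion, Set.mem_Ioo] at hx
    obtain ⟨q, m, hm1, hm2⟩ := hx
    have hεle1 : ε q.1 n ≤ 1/2 := hεle _ _
    -- fract (x + q) ∈ (0, ε q n)
    have hxq1 : (m:ℝ) < x + (q.1:ℝ) := by linarith [hm1]
    have hxq2 : x + (q.1:ℝ) < (m:ℝ) + ε q.1 n := by linarith [hm2]
    have hfl : ⌊x + (q.1:ℝ)⌋ = m := by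
      rw [Int.floor_eq_iff]
      exact ⟨le_of_lt hxq1, by linarith⟩
    have hfract : Int.fract (x + (q.1:ℝ)) = x + (q.1:ℝ) - m := by
      rw [Int.fract, hfl]
    set f : ℝ := Int.fract (x + (q.1:ℝ)) with hfdef
    have hfpos : 0 < f := by rw [hfract]; linarith
    have hflt : f < ε q.1 n := by rw [hfract]; linarith
    have hflt' : f < (w q.1 / (4*(n+1)))^2 :=
      lt_of_lt_of_le hflt (min_le_left _ _)
    have hw := hw_pos q.1 q.2
    have hcpos : (0:ℝ) < w q.1 / (4*(n+1)) := by positivity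
    -- sqrt bound
    have hsq : Real.sqrt f < w q.1 / (4*(n+1)) := by
      have := Real.sqrt_lt_sqrt (le_of_lt hfpos) hflt'
      rwa [Real.sqrt_sq (le_of_lt hcpos)] at this
    have hsqpos : 0 < Real.sqrt f := Real.sqrt_pos.2 hfpos
    -- x ≠ 1 - q
    have hne : x ≠ 1 - (q.1:ℝ) := by
      intro hxe
      have hf0 : f = 0 := by
        rw [hfdef, hxe, show (1:ℝ) - (q.1:ℝ) + (q.1:ℝ) = 1 by ring]
        simp
      linarith
    -- estimate fq
    have hb : (0:ℝ) ≤ (if x = 1 - (q.1:ℝ) then 1/2 else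
        1 / (2 * Real.sqrt (Int.fract (-(x + (q.1:ℝ)))))) := by
      split
      · norm_num
      · positivity
    have hfq' : fq q.1 x ≥ (1 / (2 * Real.sqrt f)) / 2 := by
      rw [hfq q.1 x, if_neg hne]
      rw [← hfdef]
      have := hb
      rw [if_neg hne] at this
      linarith
    have hmain : (n:ℝ) + 1 < w q.1 * fq q.1 x := by
      have h1 : w q.1 / (4 * Real.sqrt f) ≤ w q.1 * fq q.1 x := by
        have : w q.1 * ((1 / (2 * Real.sqrt f)) / 2) = w q.1 / (4 * Real.sqrt f) := by
          rw [div_div, mul_one_div,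
            show (2 * Real.sqrt f * 2) = 4 * Real.sqrt f from by ring]
        nlinarith [hfq', hw]
      have h2 : w q.1 / (4 * (w q.1 / (4*(n+1)))) < w q.1 / (4 * Real.sqrt f) := by
        apply div_lt_div_of_pos_left hw (by positivity)
        nlinarith
      have h3 : w q.1 / (4 * (w q.1 / (4*(n+1)))) = (n:ℝ) + 1 := by
        have hd : (0:ℝ) < 4 * (w q.1 / (4*(n+1))) := by nlinarith [hcpos]
        rw [div_eq_iff (ne_of_gt hd)]
        field_simp
      linarith
    -- conclude
    have hterm : (n : ENNReal) < ENNReal.ofReal (w q.1 * fq q.1 x) := by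
      rw [← ENNReal.ofReal_natCast n]
      rw [ENNReal.ofReal_lt_ofReal_iff (by linarith [hmain] : (0:ℝ) < w q.1 * fq q.1 x)]
      linarith
    calc (n : ENNReal) < ENNReal.ofReal (w q.1 * fq q.1 x) := hterm
      _ ≤ h x := by rw [hh x]; exact ENNReal.le_tsum q
  -- points in ⋂ U n ∩ [0,1] belong to S
  have hsub : ∀ x ∈ Set.Ioo (0:ℝ) 1, (∀ n, x ∈ U n) → x ∈ S := by
    intro x hx hxU
    refine ⟨Set.mem_Icc_of_Ioo hx, ?_⟩
    by_contra hne
    obtain ⟨n, hn⟩ := ENNReal.exists_nat_gt hne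
    exact absurd (hkey n x (hxU n)) (not_lt.2 (le_of_lt hn))
  -- Baire category argument
  haveI : Countable ↥S := hc.to_subtype
  set F : ℕ ⊕ ↥S → Set ℝ := fun i => Sum.elim U (fun a : ↥S => ({a.1}ᶜ : Set ℝ)) i with hFdef
  have hFopen : ∀ i, IsOpen (F i) := by
    rintro (n | a)
    · exact hUopen n
    · exact isOpen_compl_singleton
  have hFdense : ∀ i, Dense (F i) := by
    rintro (n | a)
    · exact hUdense n
    · exact dense_compl_singleton _
  have hG : Dense (⋂ i, F i) := dense_iInter_of_isOpen hFopen hFdense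
  obtain ⟨x, hxI, hxG⟩ := hG.inter_open_nonempty (Set.Ioo (0:ℝ) 1) isOpen_Ioo
    ⟨1/2, by norm_num⟩
  have hxU : ∀ n, x ∈ U n := fun n => Set.mem_iInter.1 hxG (Sum.inl n)
  have hxS : x ∈ S := hsub x hxI hxU
  have hcon := Set.mem_iInter.1 hxG (Sum.inr ⟨x, hxS⟩)
  exact hcon rfl
end
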